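/- arXiv:2304.00383 — 5 statements merged into one kernel-verified Lean document; each statement's English description precedes it below -/
import Mathlib

section
/- Let 1 ≤ p < ∞, δ > 0, and let T : L^p([0,1)) → L^p([0,1)) be a bounded linear operator. Let k < m be natural numbers and let Δ ⊆ D_m be a set of dyadic intervals of length 2^{−m} with Σ_{J∈Δ} λ(J) = 2^{−k}, and suppose ∫₀¹ (T h_J)(t)·h_J(t) dt ≥ δ·λ(J) for every J ∈ Δ. Then there exists a choice of signs γ : Δ → {±1} such that, with h̃^γ = Σ_{J∈Δ} γ(J)·h_J, one has ∫₀¹ T(h̃^γ)(t)·h̃^γ(t) dt ≥ δ·2^{−k}. -/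
open MeasureTheory Set Function Filter
open scoped ENNReal

noncomputable section

/-- Lebesgue measure on `ℝ` restricted to the interval `[0,1)`. -/
def mu01 : Measure ℝ := volume.restrict (Set.Ico (0:ℝ) 1)

/-- The dyadic interval `[i/2^m, (i+1)/2^m)` (of length `2^{-m}`, an element of `D_m`;
here `0 ≤ i < 2^m` is the 0-based index). -/
def dyadicI (m i : ℕ) : Set ℝ := Set.Ico ((i : ℝ)/2^m) ((i+1 : ℝ)/2^m)

/-- The Haar function `h_I = 1_{I⁺} - 1_{I⁻}` supported on the dyadic interval
`I = [i/2^m, (i+1)/2^m) ∈ D_m`. -/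
def haarD (m i : ℕ) : ℝ → ℝ := fun t =>
  (Set.Ico ((2*i : ℝ)/2^(m+1)) ((2*i+1 : ℝ)/2^(m+1))).indicator (fun _ => (1:ℝ)) t
  - (Set.Ico ((2*i+1 : ℝ)/2^(m+1)) ((2*i+2 : ℝ)/2^(m+1))).indicator (fun _ => (1:ℝ)) t

/-- The Haar system in its natural enumeration: `h_1 = 1_{[0,1)}` and, for `n ≥ 2`,
`h_n = h_{I_n}` where `n = 2^j + i` with `1 ≤ i ≤ 2^j` and `I_n = [(i-1)/2^j, i/2^j)`. -/
def haarN : ℕ → ℝ → ℝ := fun n =>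
  if n ≤ 1 then (Set.Ico (0:ℝ) 1).indicator (fun _ => (1:ℝ))
  else haarD (Nat.log 2 (n-1)) (n - 1 - 2^(Nat.log 2 (n-1)))

/-- `λ(I_n)`, the Lebesgue measure of the dyadic interval supporting `h_n`
(with the convention `λ(I_1) = 1`). -/
def measI : ℕ → ℝ := fun n => if n ≤ 1 then 1 else ((2:ℝ)^(Nat.log 2 (n-1)))⁻¹

open Classical in
/-- The element of `L^p([0,1))` represented by the function `f` (junk value if `f ∉ L^p`). -/
def toLp01 (p : ℝ≥0∞) (f : ℝ → ℝ) : Lp ℝ p mu01 :=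
  if h : MemLp f p mu01 then h.toLp f else 0

/-- A faithful Haar system: a sequence `(h̃_j)_{j ≥ 1}` of measurable `{0, 1, -1}`-valued
functions such that `h̃_1 = 1_{[0,1)}`, each `h̃_j` for `j ≥ 2` is a finite linear combination
of Haar functions, `supp h̃_2 = [0,1)`, `supp h̃_{2k-1} = {h̃_k = 1}` and
`supp h̃_{2k} = {h̃_k = -1}` for `k ≥ 2`. -/
structure FaithfulHaarSystem where
  h : ℕ → ℝ → ℝ
  meas : ∀ j, Measurable (h j)
  vals : ∀ j t, h j t = 0 ∨ h j t = 1 ∨ h j t = -1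
  one : h 1 = (Set.Ico (0:ℝ) 1).indicator (fun _ => (1:ℝ))
  mem_span : ∀ j, 2 ≤ j → ∃ (S : Finset (ℕ × ℕ)) (c : ℕ × ℕ → ℝ),
      h j = fun t => ∑ q ∈ S, c q * haarD q.1 q.2 t
  supp_two : Function.support (h 2) = Set.Ico (0:ℝ) 1
  supp_odd : ∀ k, 2 ≤ k → Function.support (h (2*k-1)) = {t | h k t = 1}
  supp_even : ∀ k, 2 ≤ k → Function.support (h (2*k)) = {t | h k t = -1}

end


section Aux

open MeasureTheory

/-- Sign-choice lemma: the quadratic form can be made at least the diagonal sum. -/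
lemma exists_signs_quadratic (a : ℕ → ℕ → ℝ) (Δ : Finset ℕ) :
    ∃ γ : ℕ → ℝ, (∀ i ∈ Δ, γ i = 1 ∨ γ i = -1) ∧
      ∑ i ∈ Δ, a i i ≤ ∑ i ∈ Δ, ∑ j ∈ Δ, γ i * γ j * a i j := by
  classical
  induction Δ using Finset.induction with
  | empty => exact ⟨fun _ => 1, by simp, by simp⟩
  | @insert n Δ hn ih =>
    obtain ⟨γ, hγ, hsum⟩ := ih
    set C : ℝ := (∑ j ∈ Δ, γ j * a n j) + (∑ i ∈ Δ, γ i * a i n) with hC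
    set s : ℝ := if 0 ≤ C then 1 else -1 with hs
    set γ' : ℕ → ℝ := Function.update γ n s with hγ'
    have hγ'n : γ' n = s := Function.update_self n s γ
    have hγ'i : ∀ i ∈ Δ, γ' i = γ i := fun i hi =>
      Function.update_of_ne (ne_of_mem_of_not_mem hi hn) s γ
    have hs2 : s * s = 1 := by rw [hs]; split_ifs <;> norm_num
    have hsC : 0 ≤ s * C := by
      rw [hs]; split_ifs with h
      · simpa using h
      · push_neg at h; nlinarith
    refine ⟨γ', fun i hi => ?_, ?_⟩
    · rcases Finset.mem_insert.1 hi with rfl | hi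
      · rw [hγ'n, hs]; split_ifs <;> simp
      · rw [hγ'i i hi]; exact hγ i hi
    · have e1 : ∑ j ∈ Δ, γ' n * γ' j * a n j = s * ∑ j ∈ Δ, γ j * a n j := by
        rw [Finset.mul_sum]
        exact Finset.sum_congr rfl fun j hj => by rw [hγ'n, hγ'i j hj, mul_assoc]
      have e2 : ∑ i ∈ Δ, γ' i * γ' n * a i n = s * ∑ i ∈ Δ, γ i * a i n := by
        rw [Finset.mul_sum]
        exact Finset.sum_congr rfl fun i hi => by rw [hγ'n, hγ'i i hi]; ring
      have e3 : ∑ i ∈ Δ, ∑ j ∈ Δ, γ' i * γ' j * a i j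
          = ∑ i ∈ Δ, ∑ j ∈ Δ, γ i * γ j * a i j :=
        Finset.sum_congr rfl fun i hi => Finset.sum_congr rfl fun j hj => by
          rw [hγ'i i hi, hγ'i j hj]
      have expand : ∑ i ∈ insert n Δ, ∑ j ∈ insert n Δ, γ' i * γ' j * a i j
          = s * s * a n n + s * C + ∑ i ∈ Δ, ∑ j ∈ Δ, γ i * γ j * a i j := by
        rw [Finset.sum_insert hn, Finset.sum_insert hn]
        have h1 : ∀ i ∈ Δ, ∑ j ∈ insert n Δ, γ' i * γ' j * a i j
            = γ' i * γ' n * a i n + ∑ j ∈ Δ, γ' i * γ' j * a i j :=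
          fun i _ => Finset.sum_insert hn
        rw [Finset.sum_congr rfl h1, Finset.sum_add_distrib, e1, e2, e3, hγ'n, hC]
        ring
      rw [expand, Finset.sum_insert hn, hs2]
      linarith

lemma haarD_measurable (m i : ℕ) : Measurable (haarD m i) :=
  ((measurable_const (a := (1:ℝ))).indicator measurableSet_Ico).sub
    ((measurable_const (a := (1:ℝ))).indicator measurableSet_Ico)

lemma haarD_norm_le (m i : ℕ) (t : ℝ) : ‖haarD m i t‖ ≤ 2 := by
  have h1 : ∀ s : Set ℝ, ‖(s.indicator (fun _ => (1:ℝ))) t‖ ≤ 1 := by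
    intro s; classical rw [Set.indicator_apply]; split_ifs <;> simp
  calc ‖haarD m i t‖ ≤ _ + _ := norm_sub_le _ _
    _ ≤ 1 + 1 := add_le_add (h1 _) (h1 _)
    _ = 2 := by norm_num

instance : IsFiniteMeasure mu01 := by
  constructor
  rw [mu01, Measure.restrict_apply_univ, Real.volume_Ico]
  norm_num

lemma haarD_memℒp (p : ℝ≥0∞) (m i : ℕ) : MemLp (haarD m i) p mu01 :=
  MemLp.of_bound (haarD_measurable m i).aestronglyMeasurable 2
    (Filter.Eventually.of_forall (haarD_norm_le m i))

lemma Lp_coeFn_sum (p : ℝ≥0∞) (s : Finset ℕ) (F : ℕ → Lp ℝ p mu01) :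
    (⇑(∑ i ∈ s, F i) : ℝ → ℝ) =ᵐ[mu01] fun t => ∑ i ∈ s, F i t := by
  classical
  induction s using Finset.induction with
  | empty => simp only [Finset.sum_empty]; exact Lp.coeFn_zero (E := ℝ) (p := p) (μ := mu01)
  | @insert n s hn ih =>
    rw [Finset.sum_insert hn]
    filter_upwards [Lp.coeFn_add (F n) (∑ i ∈ s, F i), ih] with t h1 h2
    simp only [Finset.sum_insert hn, h1, Pi.add_apply, h2]

end Aux

/-- Let `1 ≤ p < ∞`, `δ > 0`, `T : L^p([0,1)) → L^p([0,1))` bounded linear,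
`k < m`, and `Δ ⊆ D_m` (indexed by `Δ ⊆ {0, …, 2^m - 1}`) with `∑_{J ∈ Δ} λ(J) = 2^{-k}` and
`∫₀¹ (T h_J)(t) h_J(t) dt ≥ δ λ(J)` for all `J ∈ Δ`. Then there is a choice of signs
`γ : Δ → {±1}` such that, with `h̃^γ = ∑_{J ∈ Δ} γ(J) h_J`, one has
`∫₀¹ T(h̃^γ)(t) h̃^γ(t) dt ≥ δ 2^{-k}`. -/
theorem exists_signs_large_pairing
    (p : ℝ≥0∞) [Fact (1 ≤ p)] (hptop : p ≠ ∞)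
    (T : Lp ℝ p mu01 →L[ℝ] Lp ℝ p mu01) (δ : ℝ) (hδ : 0 < δ)
    (k m : ℕ) (hkm : k < m) (Δ : Finset ℕ) (hΔ : ∀ i ∈ Δ, i < 2 ^ m)
    (hcard : (Δ.card : ℝ) * ((2 : ℝ) ^ m)⁻¹ = ((2 : ℝ) ^ k)⁻¹)
    (hdiag : ∀ i ∈ Δ, δ * ((2 : ℝ) ^ m)⁻¹ ≤
      ∫ t, (T (toLp01 p (haarD m i))) t * haarD m i t ∂mu01) :
    ∃ γ : ℕ → ℝ, (∀ i ∈ Δ, γ i = 1 ∨ γ i = -1) ∧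
      δ * ((2 : ℝ) ^ k)⁻¹ ≤
        ∫ t, (T (toLp01 p (fun t => ∑ i ∈ Δ, γ i * haarD m i t))) t *
          (∑ i ∈ Δ, γ i * haarD m i t) ∂mu01 := by
  classical
  have hmem : ∀ i : ℕ, MemLp (haarD m i) p mu01 := haarD_memℒp p m
  set F : ℕ → Lp ℝ p mu01 := fun i => toLp01 p (haarD m i) with hFdef
  have hF : ∀ i, F i = (hmem i).toLp (haarD m i) := fun i => dif_pos (hmem i)
  have hFcoe : ∀ i, (⇑(F i) : ℝ → ℝ) =ᵐ[mu01] haarD m i := fun i =>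
    (hF i) ▸ MemLp.coeFn_toLp (hmem i)
  set a : ℕ → ℕ → ℝ := fun i j => ∫ t, (T (F i)) t * haarD m j t ∂mu01 with ha
  obtain ⟨γ, hγ, hq⟩ := exists_signs_quadratic a Δ
  refine ⟨γ, hγ, ?_⟩
  -- the represented sum function is in Lᵖ
  have hmemsum : MemLp (fun t => ∑ i ∈ Δ, γ i * haarD m i t) p mu01 :=
by
    have h := memLp_finset_sum' Δ fun (i : ℕ) _ => (hmem i).const_mul (γ i)
    have he : (∑ i ∈ Δ, fun t => γ i * haarD m i t) = (fun t => ∑ i ∈ Δ, γ i * haarD m i t) := by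
      funext t; simp
    exact he ▸ h
  -- identification of toLp01 of the sum with the Lp-sum
  have hB : toLp01 p (fun t => ∑ i ∈ Δ, γ i * haarD m i t) = ∑ i ∈ Δ, γ i • F i := by
    rw [toLp01, dif_pos hmemsum]
    refine Lp.ext ((MemLp.coeFn_toLp hmemsum).trans ?_)
    have h2 : ∀ᵐ t ∂mu01, ∀ i : ℕ, (⇑(γ i • F i) : ℝ → ℝ) t = γ i * haarD m i t := by
      rw [MeasureTheory.ae_all_iff]
      intro i
      filter_upwards [Lp.coeFn_smul (γ i) (F i), hFcoe i] with t hb hc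
      simp [hb, hc]
    filter_upwards [Lp_coeFn_sum p Δ (fun i => γ i • F i), h2] with t ht1 ht2
    rw [ht1]
    exact Finset.sum_congr rfl fun i _ => (ht2 i).symm
  -- a.e. identification of T applied to the sum
  have hcoe : (⇑(T (toLp01 p (fun t => ∑ i ∈ Δ, γ i * haarD m i t))) : ℝ → ℝ)
      =ᵐ[mu01] fun t => ∑ i ∈ Δ, γ i * (T (F i)) t := by
    rw [hB, map_sum]
    have h2 : ∀ᵐ t ∂mu01, ∀ i : ℕ, (⇑(T (γ i • F i)) : ℝ → ℝ) t = γ i * (T (F i)) t := by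
      rw [MeasureTheory.ae_all_iff]
      intro i
      rw [T.map_smul]
      filter_upwards [Lp.coeFn_smul (γ i) (T (F i))] with t hb
      simp [hb]
    filter_upwards [Lp_coeFn_sum p Δ (fun i => T (γ i • F i)), h2] with t ht1 ht2
    rw [ht1]
    exact Finset.sum_congr rfl fun i _ => ht2 i
  -- integrability of the elementary products
  have hint : ∀ i j : ℕ, Integrable (fun t => (T (F i)) t * haarD m j t) mu01 := by
    intro i j
    have h0 : Integrable (⇑(T (F i))) mu01 :=
      (Lp.memLp (T (F i))).integrable (Fact.out : 1 ≤ p)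
    have h1 : Integrable (fun t => haarD m j t * (T (F i)) t) mu01 :=
      h0.bdd_mul (haarD_measurable m j).aestronglyMeasurable
        (Filter.Eventually.of_forall (haarD_norm_le m j))
    exact h1.congr (Filter.Eventually.of_forall fun t => mul_comm _ _)
  have hint' : ∀ i j : ℕ, Integrable
      (fun t => (γ i * (T (F i)) t) * (γ j * haarD m j t)) mu01 := by
    intro i j
    have := ((hint i j).const_mul (γ i * γ j))
    exact this.congr (Filter.Eventually.of_forall fun t => by ring)
  -- the key expansion of the bilinear form
  have key : ∫ t, (T (toLp01 p (fun t => ∑ i ∈ Δ, γ i * haarD m i t))) t *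
        (∑ i ∈ Δ, γ i * haarD m i t) ∂mu01
      = ∑ i ∈ Δ, ∑ j ∈ Δ, γ i * γ j * a i j := by
    have step1 : ∫ t, (T (toLp01 p (fun t => ∑ i ∈ Δ, γ i * haarD m i t))) t *
          (∑ i ∈ Δ, γ i * haarD m i t) ∂mu01
        = ∫ t, ∑ i ∈ Δ, ∑ j ∈ Δ, (γ i * (T (F i)) t) * (γ j * haarD m j t) ∂mu01 := by
      refine integral_congr_ae ?_
      filter_upwards [hcoe] with t ht
      rw [ht, Finset.sum_mul_sum]
    rw [step1, integral_finset_sum Δ (fun i _ => integrable_finset_sum Δ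
      (fun j _ => hint' i j))]
    refine Finset.sum_congr rfl fun i _ => ?_
    rw [integral_finset_sum Δ (fun j _ => hint' i j)]
    refine Finset.sum_congr rfl fun j _ => ?_
    have : ∫ t, (γ i * (T (F i)) t) * (γ j * haarD m j t) ∂mu01
        = ∫ t, (γ i * γ j) * ((T (F i)) t * haarD m j t) ∂mu01 :=
      integral_congr_ae (Filter.Eventually.of_forall fun t => by ring)
    rw [this, MeasureTheory.integral_const_mul, ha, mul_assoc]
  rw [key]
  -- conclude from the diagonal lower bound
  have hdiag' : ∑ i ∈ Δ, δ * ((2:ℝ) ^ m)⁻¹ ≤ ∑ i ∈ Δ, a i i :=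
    Finset.sum_le_sum fun i hi => hdiag i hi
  have hconst : ∑ _i ∈ Δ, δ * ((2:ℝ) ^ m)⁻¹ = δ * ((2:ℝ) ^ k)⁻¹ := by
    rw [Finset.sum_const, nsmul_eq_mul, ← hcard]; ring
  linarith [hq]
end

section
/- Let (h̃_j)_{j≥1} be a faithful Haar system. Then for every j ≥ 1 and all real scalars ξ_1, …, ξ_j, the functions f_j = Σ_{i=1}^j ξ_i·h_i and g_j = Σ_{i=1}^j ξ_i·h̃_i have the same distribution with respect to Lebesgue measure on [0,1); that is, for every Borel set B ⊆ ℝ, λ({t ∈ [0,1) : f_j(t) ∈ B}) = λ({t ∈ [0,1) : g_j(t) ∈ B}). -/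
open MeasureTheory Set Function Filter
open scoped ENNReal

open MeasureTheory Set Function Filter
open scoped ENNReal

namespace FHSproof

noncomputable section
open Classical

lemma haarD_cases (m i : ℕ) (t : ℝ) :
    (t ∈ Set.Ico ((2*i : ℝ)/2^(m+1)) ((2*i+1 : ℝ)/2^(m+1)) ∧ haarD m i t = 1)
    ∨ (t ∈ Set.Ico ((2*i+1 : ℝ)/2^(m+1)) ((2*i+2 : ℝ)/2^(m+1)) ∧ haarD m i t = -1)
    ∨ (t ∉ Set.Ico ((2*i : ℝ)/2^(m+1)) ((2*i+1 : ℝ)/2^(m+1))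
        ∧ t ∉ Set.Ico ((2*i+1 : ℝ)/2^(m+1)) ((2*i+2 : ℝ)/2^(m+1)) ∧ haarD m i t = 0) := by
  by_cases h1 : t ∈ Set.Ico ((2*i : ℝ)/2^(m+1)) ((2*i+1 : ℝ)/2^(m+1))
  · have h2 : t ∉ Set.Ico ((2*i+1 : ℝ)/2^(m+1)) ((2*i+2 : ℝ)/2^(m+1)) := by
      intro h2; exact absurd h1.2 (not_lt.2 h2.1)
    refine Or.inl ⟨h1, ?_⟩
    unfold haarD
    rw [Set.indicator_of_mem h1, Set.indicator_of_notMem h2]; ring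
  · by_cases h2 : t ∈ Set.Ico ((2*i+1 : ℝ)/2^(m+1)) ((2*i+2 : ℝ)/2^(m+1))
    · refine Or.inr (Or.inl ⟨h2, ?_⟩)
      unfold haarD
      rw [Set.indicator_of_mem h2, Set.indicator_of_notMem h1]; ring
    · refine Or.inr (Or.inr ⟨h1, h2, ?_⟩)
      unfold haarD
      rw [Set.indicator_of_notMem h1, Set.indicator_of_notMem h2]; ring

lemma haarD_eq_one_iff (m i : ℕ) (t : ℝ) :
    haarD m i t = 1 ↔ t ∈ Set.Ico ((2*i : ℝ)/2^(m+1)) ((2*i+1 : ℝ)/2^(m+1)) := by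
  rcases haarD_cases m i t with ⟨h, e⟩ | ⟨h, e⟩ | ⟨h1, h2, e⟩
  · rw [e]; simp [h]
  · rw [e]
    constructor
    · intro h'; norm_num at h'
    · intro h'; exact absurd h.1 (not_le.2 h'.2)
  · rw [e]
    constructor
    · intro h'; norm_num at h'
    · intro h'; exact (h1 h').elim

lemma haarD_eq_neg_one_iff (m i : ℕ) (t : ℝ) :
    haarD m i t = -1 ↔ t ∈ Set.Ico ((2*i+1 : ℝ)/2^(m+1)) ((2*i+2 : ℝ)/2^(m+1)) := by
  rcases haarD_cases m i t with ⟨h, e⟩ | ⟨h, e⟩ | ⟨h1, h2, e⟩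
  · rw [e]
    constructor
    · intro h'; norm_num at h'
    · intro h'; exact absurd h'.1 (not_le.2 h.2)
  · rw [e]; simp [h]
  · rw [e]
    constructor
    · intro h'; norm_num at h'
    · intro h'; exact (h2 h').elim

lemma haarD_support (m i : ℕ) :
    Function.support (haarD m i) = Set.Ico ((2*i : ℝ)/2^(m+1)) ((2*i+2 : ℝ)/2^(m+1)) := by
  have key : Set.Ico ((2*i : ℝ)/2^(m+1)) ((2*i+1 : ℝ)/2^(m+1))
      ∪ Set.Ico ((2*i+1 : ℝ)/2^(m+1)) ((2*i+2 : ℝ)/2^(m+1))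
      = Set.Ico ((2*i : ℝ)/2^(m+1)) ((2*i+2 : ℝ)/2^(m+1)) := by
    apply Set.Ico_union_Ico_eq_Ico
    · gcongr <;> norm_num
    · gcongr <;> norm_num
  ext t
  rw [← key]
  simp only [Function.mem_support, Set.mem_union]
  rcases haarD_cases m i t with ⟨h, e⟩ | ⟨h, e⟩ | ⟨h1, h2, e⟩
  · rw [e]; exact ⟨fun _ => Or.inl h, fun _ => one_ne_zero⟩
  · rw [e]; exact ⟨fun _ => Or.inr h, fun _ => by norm_num⟩
  · rw [e]; exact ⟨fun h' => (h' rfl).elim, fun h' => (h'.elim h1 h2).elim⟩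

lemma haarD_measurable (m i : ℕ) : Measurable (haarD m i) := by
  unfold haarD
  exact ((measurable_const.indicator measurableSet_Ico).sub
    (measurable_const.indicator measurableSet_Ico))

lemma haarD_integrable (m i : ℕ) : Integrable (haarD m i) := by
  unfold haarD
  apply Integrable.sub <;>
    exact (integrable_indicator_iff measurableSet_Ico).2
      (integrableOn_const measure_Ico_lt_top.ne)

lemma haarD_integral (m i : ℕ) : ∫ t, haarD m i t = 0 := by
  unfold haarD
  rw [integral_sub ((integrable_indicator_iff measurableSet_Ico).2
      (integrableOn_const measure_Ico_lt_top.ne))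
    ((integrable_indicator_iff measurableSet_Ico).2
      (integrableOn_const measure_Ico_lt_top.ne))]
  rw [integral_indicator_const _ measurableSet_Ico, integral_indicator_const _ measurableSet_Ico]
  rw [Real.volume_real_Ico, Real.volume_real_Ico]
  have h1 : ((2*i+1 : ℝ)/2^(m+1)) - ((2*i : ℝ)/2^(m+1)) = 1/2^(m+1) := by ring
  have h2 : ((2*i+2 : ℝ)/2^(m+1)) - ((2*i+1 : ℝ)/2^(m+1)) = 1/2^(m+1) := by ring
  rw [h1, h2]; ring

end

end FHSproof

namespace FHSproof
noncomputable section
open Classical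

lemma haarN_eq (n : ℕ) (hn : 2 ≤ n) :
    haarN n = haarD (Nat.log 2 (n-1)) (n-1-2^(Nat.log 2 (n-1))) := by
  unfold haarN; rw [if_neg (by omega)]

lemma haarD_double_left (m i : ℕ) :
    Function.support (haarD (m+1) (2*i)) = {t | haarD m i t = 1} := by
  rw [haarD_support]
  ext t
  rw [Set.mem_setOf_eq, haarD_eq_one_iff]
  have h0 : (2:ℝ)^(m+1) ≠ 0 := by positivity
  have e1 : (2*((2*i:ℕ):ℝ))/2^(m+1+1) = 2*(i:ℝ)/2^(m+1) := by
    push_cast; rw [pow_succ]; field_simp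
  have e2 : (2*((2*i:ℕ):ℝ)+2)/2^(m+1+1) = (2*(i:ℝ)+1)/2^(m+1) := by
    push_cast; rw [pow_succ]; field_simp
  rw [e1, e2]

lemma haarD_double_right (m i : ℕ) :
    Function.support (haarD (m+1) (2*i+1)) = {t | haarD m i t = -1} := by
  rw [haarD_support]
  ext t
  rw [Set.mem_setOf_eq, haarD_eq_neg_one_iff]
  have h0 : (2:ℝ)^(m+1) ≠ 0 := by positivity
  have e1 : (2*((2*i+1:ℕ):ℝ))/2^(m+1+1) = (2*(i:ℝ)+1)/2^(m+1) := by
    push_cast; rw [pow_succ]; field_simp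
  have e2 : (2*((2*i+1:ℕ):ℝ)+2)/2^(m+1+1) = (2*(i:ℝ)+2)/2^(m+1) := by
    push_cast; rw [pow_succ]; field_simp; ring
  rw [e1, e2]

lemma std_log_facts (k : ℕ) (hk : 2 ≤ k) :
    2^(Nat.log 2 (k-1)) ≤ k-1 ∧ k-1 < 2^(Nat.log 2 (k-1)+1) :=
  ⟨Nat.pow_log_le_self 2 (by omega), Nat.lt_pow_succ_log_self (by norm_num) _⟩

/-- The standard Haar system is a faithful Haar system. -/
def stdFHS : FaithfulHaarSystem where
  h := haarN
  meas := by
    intro n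
    unfold haarN
    split
    · exact measurable_const.indicator measurableSet_Ico
    · exact haarD_measurable _ _
  vals := by
    intro n t
    unfold haarN
    split
    · by_cases h : t ∈ Set.Ico (0:ℝ) 1
      · rw [Set.indicator_of_mem h]; tauto
      · rw [Set.indicator_of_notMem h]; tauto
    · rcases haarD_cases (Nat.log 2 (n-1)) (n-1-2^(Nat.log 2 (n-1))) t with
        ⟨_, e⟩ | ⟨_, e⟩ | ⟨_, _, e⟩ <;> rw [e] <;> tauto
  one := by unfold haarN; rw [if_pos (by norm_num)]
  mem_span := by
    intro n hn
    refine ⟨{(Nat.log 2 (n-1), n-1-2^(Nat.log 2 (n-1)))}, fun _ => 1, ?_⟩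
    funext t
    rw [Finset.sum_singleton, one_mul, haarN_eq n hn]
  supp_two := by
    have hlog : Nat.log 2 1 = 0 := Nat.log_eq_of_pow_le_of_lt_pow (by norm_num) (by norm_num)
    rw [haarN_eq 2 le_rfl]
    norm_num [hlog, haarD_support]
  supp_odd := by
    intro k hk
    obtain ⟨h1, h2⟩ := std_log_facts k hk
    set m := Nat.log 2 (k-1) with hm
    set i := k - 1 - 2^m with hi
    have hpow : 2^(m+1) = 2*2^m := by ring
    have hlog : Nat.log 2 (2*k-1-1) = m+1 := by
      apply Nat.log_eq_of_pow_le_of_lt_pow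
      · have : 2^(m+1) = 2*2^m := by ring
        omega
      · have : 2^(m+1+1) = 2*(2*2^m) := by ring
        omega
    have hidx : 2*k-1-1-2^(m+1) = 2*i := by omega
    rw [haarN_eq (2*k-1) (by omega), hlog, hidx, haarN_eq k hk, ← hm, ← hi]
    exact haarD_double_left m i
  supp_even := by
    intro k hk
    obtain ⟨h1, h2⟩ := std_log_facts k hk
    set m := Nat.log 2 (k-1) with hm
    set i := k - 1 - 2^m with hi
    have hpow : 2^(m+1) = 2*2^m := by ring
    have hlog : Nat.log 2 (2*k-1) = m+1 := by
      apply Nat.log_eq_of_pow_le_of_lt_pow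
      · have : 2^(m+1) = 2*2^m := by ring
        omega
      · have : 2^(m+1+1) = 2*(2*2^m) := by ring
        omega
    have hidx : 2*k-1-2^(m+1) = 2*i+1 := by omega
    rw [haarN_eq (2*k) (by omega)]
    have : 2*k-1 = 2*k-1 := rfl
    rw [show 2*k-1 = 2*k-1 from rfl] at hlog
    rw [show (2*k)-1 = 2*k-1 from rfl, hlog, hidx, haarN_eq k hk, ← hm, ← hi]
    exact haarD_double_right m i

end
end FHSproof

namespace FHSproof
noncomputable section
open Classical

/-- combinatorial depth of node `n` in the dyadic tree (root `2`, parent of `n` is `(n+1)/2`). -/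
def d : ℕ → ℕ
  | 0 => 0
  | 1 => 0
  | 2 => 0
  | (n+3) => d ((n+4)/2) + 1
decreasing_by omega

lemma d_succ (n : ℕ) (hn : 3 ≤ n) : d n = d ((n+1)/2) + 1 := by
  obtain ⟨m, rfl⟩ : ∃ m, n = m + 3 := ⟨n - 3, by omega⟩
  show d (m+3) = _
  rw [d]

variable (H : FaithfulHaarSystem)

lemma ennreal_two_cancel {x y : ℝ≥0∞} (h : 2 * x = 2 * y) : x = y := by
  have h1 : 2⁻¹ * (2 * x) = 2⁻¹ * (2 * y) := by rw [h]
  rwa [← mul_assoc, ← mul_assoc, ENNReal.inv_mul_cancel (by norm_num) (by norm_num),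
    one_mul, one_mul] at h1

lemma supp_subset : ∀ n, 1 ≤ n → Function.support (H.h n) ⊆ Set.Ico (0:ℝ) 1 := by
  intro n
  induction n using Nat.strong_induction_on with
  | _ n IH =>
    intro hn
    match n, hn with
    | 1, _ =>
      rw [H.one]
      intro t ht
      rw [Function.mem_support] at ht
      by_contra hmem
      exact ht (Set.indicator_of_notMem hmem _)
    | 2, _ => rw [H.supp_two]
    | (n+3), _ =>
      set k := (n+3+1)/2 with hk
      have hk2 : 2 ≤ k := by omega
      have hkn : k < n+3 := by omega
      have hsub : {t | H.h k t = 1} ∪ {t | H.h k t = -1} ⊆ Function.support (H.h k) := by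
        intro t ht
        rw [Function.mem_support]
        rcases ht with ht | ht <;> rw [Set.mem_setOf_eq] at ht <;> rw [ht] <;> norm_num
      rcases Nat.even_or_odd (n+3) with he | ho
      · have : n+3 = 2*k := by rcases he with ⟨r, hr⟩; omega
        rw [this, H.supp_even k hk2]
        exact (subset_trans (fun t ht => hsub (Or.inr ht)) (IH k hkn (by omega)))
      · have : n+3 = 2*k-1 := by rcases ho with ⟨r, hr⟩; omega
        rw [this, H.supp_odd k hk2]
        exact (subset_trans (fun t ht => hsub (Or.inl ht)) (IH k hkn (by omega)))

lemma level_meas (n : ℕ) (s : ℝ) : MeasurableSet {t | H.h n t = s} :=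
  (H.meas n) (measurableSet_singleton s)

lemma level_subset (n : ℕ) (s : ℝ) (hs : s ≠ 0) :
    {t | H.h n t = s} ⊆ Function.support (H.h n) := by
  intro t ht
  rw [Set.mem_setOf_eq] at ht
  rw [Function.mem_support, ht]
  exact hs

lemma level_vol_lt_top (n : ℕ) (hn : 1 ≤ n) (s : ℝ) (hs : s ≠ 0) :
    volume {t | H.h n t = s} < ⊤ := by
  calc volume {t | H.h n t = s} ≤ volume (Set.Ico (0:ℝ) 1) :=
        measure_mono ((level_subset H n s hs).trans (supp_subset H n hn))
    _ < ⊤ := measure_Ico_lt_top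

lemma supp_eq_union (n : ℕ) :
    Function.support (H.h n) = {t | H.h n t = 1} ∪ {t | H.h n t = -1} := by
  ext t
  rw [Function.mem_support]
  rcases H.vals n t with e | e | e <;> simp [e]

lemma integral_eq_zero (n : ℕ) (hn : 2 ≤ n) : ∫ t, H.h n t = 0 := by
  obtain ⟨S, c, hsp⟩ := H.mem_span n hn
  have : (fun t => H.h n t) = fun t => ∑ q ∈ S, c q * haarD q.1 q.2 t := by
    funext t; rw [hsp]
  rw [this, integral_finset_sum S
    (fun q _ => ((haarD_integrable q.1 q.2).const_mul (c q)))]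
  have : ∀ q ∈ S, ∫ t, c q * haarD q.1 q.2 t = 0 := by
    intro q _
    rw [integral_const_mul, haarD_integral]; ring
  rw [Finset.sum_congr rfl this, Finset.sum_const, smul_zero]

lemma halves (n : ℕ) (hn : 2 ≤ n) :
    volume {t | H.h n t = 1} = volume {t | H.h n t = -1} := by
  set P := {t | H.h n t = 1} with hP
  set M := {t | H.h n t = -1} with hM
  have hPfin : volume P < ⊤ := level_vol_lt_top H n (by omega) 1 one_ne_zero
  have hMfin : volume M < ⊤ := level_vol_lt_top H n (by omega) (-1) (by norm_num)
  have funeq : H.h n = fun t => P.indicator (fun _ => (1:ℝ)) t - M.indicator (fun _ => 1) t := by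
    funext t
    have hPt : t ∈ P ↔ H.h n t = 1 := Iff.rfl
    have hMt : t ∈ M ↔ H.h n t = -1 := Iff.rfl
    rcases H.vals n t with e | e | e
    · rw [Set.indicator_of_notMem (by rw [hPt, e]; norm_num),
        Set.indicator_of_notMem (by rw [hMt, e]; norm_num), e]; ring
    · rw [Set.indicator_of_mem (hPt.2 e),
        Set.indicator_of_notMem (by rw [hMt, e]; norm_num), e]; ring
    · rw [Set.indicator_of_notMem (by rw [hPt, e]; norm_num),
        Set.indicator_of_mem (hMt.2 e), e]; ring
  have hint : ∫ t, H.h n t = (volume P).toReal - (volume M).toReal := by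
    rw [funeq, integral_sub
      ((integrable_indicator_iff (level_meas H n 1)).2
        (integrableOn_const hPfin.ne))
      ((integrable_indicator_iff (level_meas H n (-1))).2
        (integrableOn_const hMfin.ne)),
      integral_indicator_const _ (level_meas H n 1),
      integral_indicator_const _ (level_meas H n (-1))]
    simp [measureReal_def]
    rfl
  rw [integral_eq_zero H n hn] at hint
  have : (volume P).toReal = (volume M).toReal := by linarith
  exact (ENNReal.toReal_eq_toReal_iff' hPfin.ne hMfin.ne).1 this

lemma two_mul_level (n : ℕ) (hn : 2 ≤ n) (s : ℝ) (hs : s = 1 ∨ s = -1) :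
    2 * volume {t | H.h n t = s} = volume (Function.support (H.h n)) := by
  have hdisj : Disjoint {t | H.h n t = 1} {t | H.h n t = -1} := by
    rw [Set.disjoint_left]
    intro t h1 h2
    rw [Set.mem_setOf_eq] at h1 h2
    rw [h1] at h2; norm_num at h2
  rw [supp_eq_union H n, measure_union hdisj (level_meas H n (-1))]
  rcases hs with rfl | rfl
  · rw [← halves H n hn, two_mul]
  · rw [halves H n hn, two_mul]

lemma vol_supp : ∀ n, 2 ≤ n → volume (Function.support (H.h n)) = 2⁻¹ ^ (d n) := by
  intro n
  induction n using Nat.strong_induction_on with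
  | _ n IH =>
    intro hn
    match n, hn with
    | 2, _ =>
      have hd2 : d 2 = 0 := by simp [d]
      rw [H.supp_two, Real.volume_Ico, hd2]
      norm_num
    | (n+3), _ =>
      set k := (n+3+1)/2 with hk
      have hk2 : 2 ≤ k := by omega
      have hkn : k < n+3 := by omega
      have hdn : d (n+3) = d k + 1 := d_succ (n+3) (by omega)
      have key : ∀ s : ℝ, s = 1 ∨ s = -1 → volume {t | H.h k t = s} = 2⁻¹ ^ (d k + 1) := by
        intro s hs
        have h2 : 2 * volume {t | H.h k t = s} = 2⁻¹ ^ (d k) := by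
          rw [two_mul_level H k hk2 s hs, IH k hkn hk2]
        have h2' : 2 * ((2:ℝ≥0∞)⁻¹ ^ (d k + 1)) = 2⁻¹ ^ (d k) := by
          rw [pow_succ]
          rw [mul_comm ((2:ℝ≥0∞)⁻¹ ^ d k) 2⁻¹, ← mul_assoc,
            ENNReal.mul_inv_cancel (by norm_num) (by norm_num), one_mul]
        exact ennreal_two_cancel (h2.trans h2'.symm)
      rcases Nat.even_or_odd (n+3) with he | ho
      · have heq : n+3 = 2*k := by rcases he with ⟨r, hr⟩; omega
        have hsupp : Function.support (H.h (n+3)) = {t | H.h k t = -1} := by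
          rw [heq]; exact H.supp_even k hk2
        rw [hsupp, hdn]
        exact key (-1) (Or.inr rfl)
      · have heq : n+3 = 2*k-1 := by rcases ho with ⟨r, hr⟩; omega
        have hsupp : Function.support (H.h (n+3)) = {t | H.h k t = 1} := by
          rw [heq]; exact H.supp_odd k hk2
        rw [hsupp, hdn]
        exact key 1 (Or.inl rfl)

lemma vol_level (n : ℕ) (hn : 2 ≤ n) (s : ℝ) (hs : s = 1 ∨ s = -1) :
    volume {t | H.h n t = s} = 2⁻¹ ^ (d n + 1) := by
  have h2 : 2 * volume {t | H.h n t = s} = 2⁻¹ ^ (d n) := by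
    rw [two_mul_level H n hn s hs, vol_supp H n hn]
  have h2' : 2 * ((2:ℝ≥0∞)⁻¹ ^ (d n + 1)) = 2⁻¹ ^ (d n) := by
    rw [pow_succ]
    rw [mul_comm ((2:ℝ≥0∞)⁻¹ ^ d n) 2⁻¹, ← mul_assoc,
      ENNReal.mul_inv_cancel (by norm_num) (by norm_num), one_mul]
  exact ennreal_two_cancel (h2.trans h2'.symm)

end
end FHSproof

namespace FHSproof
noncomputable section
open scoped Classical

/-- the child of node `m` selected by sign `s`. -/
def childOf (m : ℕ) (s : ℝ) : ℕ := if m ≤ 1 then 2 else if s = 1 then 2*m - 1 else 2*m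

/-- the deepest active node of the sign pattern `ε` up to index `j`
(`none` if the pattern is inconsistent). -/
def C (ε : ℕ → ℝ) : ℕ → Option ℕ
  | 0 => none
  | 1 => if ε 1 = 1 then some 1 else none
  | 2 => match C ε 1 with
    | none => none
    | some _ => if ε 2 = 1 ∨ ε 2 = -1 then some 2 else none
  | (j+3) => match C ε (j+2) with
    | none => none
    | some N =>
      if ε ((j+3+1)/2) = (if (j+3) % 2 = 1 then (1:ℝ) else -1) then
        (if ε (j+3) = 1 ∨ ε (j+3) = -1 then some (j+3) else none)
      else (if ε (j+3) = 0 then some N else none)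

lemma C_one (ε : ℕ → ℝ) : C ε 1 = if ε 1 = 1 then some 1 else none := by rw [C]

lemma C_two_none (ε : ℕ → ℝ) (h : C ε 1 = none) : C ε 2 = none := by rw [C, h]

lemma C_two_some (ε : ℕ → ℝ) (N : ℕ) (h : C ε 1 = some N) :
    C ε 2 = if ε 2 = 1 ∨ ε 2 = -1 then some 2 else none := by rw [C, h]

lemma C_step_none (ε : ℕ → ℝ) (p : ℕ) (h : C ε (p+2) = none) : C ε (p+3) = none := by
  rw [C, h]

lemma C_step_some (ε : ℕ → ℝ) (p N : ℕ) (h : C ε (p+2) = some N) :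
    C ε (p+3) = if ε ((p+3+1)/2) = (if (p+3) % 2 = 1 then (1:ℝ) else -1) then
        (if ε (p+3) = 1 ∨ ε (p+3) = -1 then some (p+3) else none)
      else (if ε (p+3) = 0 then some N else none) := by
  rw [C, h]

/-- the measure that the atom of pattern `ε` up to index `j` must have. -/
def ν (ε : ℕ → ℝ) (j : ℕ) : ℝ≥0∞ :=
  match C ε j with
  | none => 0
  | some N => if N = 1 then 1 else 2⁻¹ ^ (d N + 1)

/-- the atom of the sign pattern `ε` up to index `j`. -/
def Aset (H : FaithfulHaarSystem) (ε : ℕ → ℝ) (j : ℕ) : Set ℝ :=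
  Set.Ico (0:ℝ) 1 ∩ ⋂ i ∈ Finset.Icc 1 j, {t | H.h i t = ε i}

variable (H : FaithfulHaarSystem)

lemma mem_Aset {ε : ℕ → ℝ} {j : ℕ} {t : ℝ} :
    t ∈ Aset H ε j ↔ t ∈ Set.Ico (0:ℝ) 1 ∧ ∀ i, 1 ≤ i → i ≤ j → H.h i t = ε i := by
  simp [Aset, Set.mem_iInter, Finset.mem_Icc, and_imp]

lemma Aset_succ (ε : ℕ → ℝ) (j : ℕ) :
    Aset H ε (j+1) = Aset H ε j ∩ {t | H.h (j+1) t = ε (j+1)} := by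
  ext t
  rw [Set.mem_inter_iff, mem_Aset, mem_Aset, Set.mem_setOf_eq]
  constructor
  · rintro ⟨h1, h2⟩
    exact ⟨⟨h1, fun i a b => h2 i a (by omega)⟩, h2 (j+1) (by omega) le_rfl⟩
  · rintro ⟨⟨h1, h2⟩, h3⟩
    refine ⟨h1, fun i a b => ?_⟩
    by_cases hij : i = j+1
    · rw [hij]; exact h3
    · exact h2 i a (by omega)

lemma measurable_Aset (ε : ℕ → ℝ) (j : ℕ) : MeasurableSet (Aset H ε j) :=
  measurableSet_Ico.inter
    (MeasurableSet.biInter (Finset.Icc 1 j).countable_toSet (fun i _ => level_meas H i (ε i)))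

/-- support of `h n` in terms of the parent node, `n ≥ 3`. -/
lemma supp_parent (n : ℕ) (hn : 3 ≤ n) :
    Function.support (H.h n) = {t | H.h ((n+1)/2) t = (if n % 2 = 1 then (1:ℝ) else -1)} := by
  set k := (n+1)/2 with hk
  have hk2 : 2 ≤ k := by omega
  rcases Nat.even_or_odd n with he | ho
  · have h2 : n % 2 = 0 := by rcases he with ⟨r, hr⟩; omega
    have heq : n = 2*k := by omega
    rw [h2]
    norm_num
    rw [heq]
    exact H.supp_even k hk2
  · have h2 : n % 2 = 1 := by rcases ho with ⟨r, hr⟩; omega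
    have heq : n = 2*k-1 := by omega
    rw [h2]
    norm_num
    rw [heq]
    exact H.supp_odd k hk2

def GoodN (ε : ℕ → ℝ) (j N : ℕ) : Prop :=
  1 ≤ N ∧ N ≤ j ∧ (N = 1 → ε 1 = 1) ∧ (2 ≤ N → ε N = 1 ∨ ε N = -1) ∧
  j < childOf N (ε N) ∧
  (∀ m, 1 ≤ m → m ≤ j → m ≠ N → (ε m = 0 ∨ ((ε m = 1 ∨ ε m = -1) ∧ childOf m (ε m) ≤ j)))

lemma main_induction : ∀ j, 1 ≤ j → ∀ ε : ℕ → ℝ,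
    (C ε j = none → Aset H ε j = ∅) ∧
    (∀ N, C ε j = some N →
      Aset H ε j = Set.Ico (0:ℝ) 1 ∩ {t | H.h N t = ε N} ∧ GoodN ε j N) := by
  intro j hj
  induction j, hj using Nat.le_induction with
  | base =>
    intro ε
    by_cases hε : ε 1 = 1
    · have hC : C ε 1 = some 1 := by rw [C_one, if_pos hε]
      constructor
      · intro h; rw [hC] at h; cases h
      · intro N hN
        rw [hC] at hN
        injection hN with hN1
        subst hN1
        constructor
        · ext t
          rw [mem_Aset, Set.mem_inter_iff, Set.mem_setOf_eq]
          constructor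
          · rintro ⟨h1, h2⟩; exact ⟨h1, h2 1 le_rfl le_rfl⟩
          · rintro ⟨h1, h2⟩
            refine ⟨h1, fun i a b => ?_⟩
            have : i = 1 := by omega
            rw [this]; exact h2
        · refine ⟨le_rfl, le_rfl, fun _ => hε, fun h => by omega, ?_, ?_⟩
          · show 1 < childOf 1 (ε 1)
            rw [childOf, if_pos le_rfl]; omega
          · intro m h1 h2 h3; omega
    · have hC : C ε 1 = none := by rw [C_one, if_neg hε]
      constructor
      · intro _
        ext t
        rw [mem_Aset]
        simp only [Set.mem_empty_iff_false, iff_false]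
        rintro ⟨h1, h2⟩
        have := h2 1 le_rfl le_rfl
        rw [H.one, Set.indicator_of_mem h1] at this
        exact hε this.symm
      · intro N hN; rw [hC] at hN; cases hN
  | succ j hj IH =>
    intro ε
    obtain ⟨IHnone, IHsome⟩ := IH ε
    rcases Nat.lt_or_ge j 2 with hj1 | hj2
    -- case j = 1, proving statement for index 2
    · have hj1' : j = 1 := by omega
      subst hj1'
      show (C ε 2 = none → Aset H ε 2 = ∅) ∧
        (∀ N, C ε 2 = some N →
          Aset H ε 2 = Set.Ico (0:ℝ) 1 ∩ {t | H.h N t = ε N} ∧ GoodN ε 2 N)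
      rcases hC1 : C ε 1 with _ | N
      · have hA : Aset H ε 1 = ∅ := IHnone hC1
        have hA2 : Aset H ε 2 = ∅ := by
          rw [show (2:ℕ) = 1+1 from rfl, Aset_succ, hA, Set.empty_inter]
        have hC2 : C ε 2 = none := C_two_none ε hC1
        exact ⟨fun _ => hA2, fun N hN => by rw [hC2] at hN; cases hN⟩
      · obtain ⟨hAform, hgood⟩ := IHsome N hC1
        have hN1 : N = 1 := by
          have g1 := hgood.1
          have g2 := hgood.2.1
          omega
        subst hN1
        have hε1 : ε 1 = 1 := hgood.2.2.1 rfl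
        have hA1 : Aset H ε 1 = Set.Ico (0:ℝ) 1 := by
          rw [hAform, hε1]
          apply Set.inter_eq_left.2
          intro t ht
          rw [Set.mem_setOf_eq, H.one, Set.indicator_of_mem ht]
        by_cases hε2 : ε 2 = 1 ∨ ε 2 = -1
        · have hC2 : C ε 2 = some 2 := by
            rw [C_two_some ε 1 hC1, if_pos hε2]
          constructor
          · intro h; rw [hC2] at h; cases h
          · intro N' hN'
            rw [hC2] at hN'
            injection hN' with hN2
            subst hN2
            constructor
            · rw [show (2:ℕ) = 1+1 from rfl, Aset_succ, hA1]
            · refine ⟨by omega, le_rfl, fun h => by omega, fun _ => hε2, ?_, ?_⟩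
              · show 2 < childOf 2 (ε 2)
                rw [childOf, if_neg (by omega)]
                split <;> omega
              · intro m h1 h2 h3
                have hm1 : m = 1 := by omega
                subst hm1
                right
                refine ⟨Or.inl hε1, ?_⟩
                rw [childOf, if_pos le_rfl]
        · have hC2 : C ε 2 = none := by
            rw [C_two_some ε 1 hC1, if_neg hε2]
          refine ⟨fun _ => ?_, fun N' hN' => by rw [hC2] at hN'; cases hN'⟩
          rw [show (2:ℕ) = 1+1 from rfl, Aset_succ, hA1]
          ext t
          simp only [Set.mem_inter_iff, Set.mem_setOf_eq, Set.mem_empty_iff_false, iff_false,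
            not_and]
          intro ht
          have hsupp : t ∈ Function.support (H.h 2) := by rw [H.supp_two]; exact ht
          rw [Function.mem_support] at hsupp
          rcases H.vals 2 t with e | e | e
          · exact (hsupp e).elim
          · rw [e]; intro h; exact hε2 (Or.inl h.symm)
          · rw [e]; intro h; exact hε2 (Or.inr h.symm)
    -- case j ≥ 2, proving statement for index j+1 ≥ 3
    · obtain ⟨p, rfl⟩ : ∃ p, j = p + 2 := ⟨j - 2, by omega⟩
      show (C ε (p+3) = none → Aset H ε (p+3) = ∅) ∧
        (∀ N, C ε (p+3) = some N →
          Aset H ε (p+3) = Set.Ico (0:ℝ) 1 ∩ {t | H.h N t = ε N} ∧ GoodN ε (p+3) N)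
      set k := (p+3+1)/2 with hk
      set σ : ℝ := if (p+3) % 2 = 1 then (1:ℝ) else -1 with hσdef
      have hσval : σ = 1 ∨ σ = -1 := by rw [hσdef]; split <;> simp
      have hσ0 : σ ≠ 0 := by rcases hσval with h | h <;> rw [h] <;> norm_num
      have hk2 : 2 ≤ k := by omega
      have hkj : k ≤ p + 2 := by omega
      have hchild : childOf k σ = p+3 := by
        rw [childOf, if_neg (by omega), hσdef]
        rcases Nat.even_or_odd (p+3) with he | ho
        · have h2 : (p+3) % 2 = 0 := by rcases he with ⟨r, hr⟩; omega
          rw [h2]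
          norm_num
          omega
        · have h2 : (p+3) % 2 = 1 := by rcases ho with ⟨r, hr⟩; omega
          rw [h2]
          norm_num
          omega
      have hsupp : Function.support (H.h (p+3)) = {t | H.h k t = σ} :=
        supp_parent H (p+3) (by omega)
      have hAsucc : Aset H ε (p+3) = Aset H ε (p+2) ∩ {t | H.h (p+3) t = ε (p+3)} :=
        Aset_succ H ε (p+2)
      rcases hC1 : C ε (p+2) with _ | N
      · have hA : Aset H ε (p+2) = ∅ := IHnone hC1
        have hA2 : Aset H ε (p+3) = ∅ := by rw [hAsucc, hA, Set.empty_inter]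
        have hC2 : C ε (p+3) = none := C_step_none ε p hC1
        exact ⟨fun _ => hA2, fun N hN => by rw [hC2] at hN; cases hN⟩
      · obtain ⟨hAform, hNge, hNle, hN1, hN2, hNchild, hNall⟩ := IHsome N hC1
        by_cases hεk : ε k = σ
        -- parent of p+3 is active with the matching sign, so k = N
        · have hkN : k = N := by
            by_contra hne
            have := hNall k (by omega) hkj hne
            rcases this with h0 | ⟨_, hle⟩
            · rw [h0] at hεk; exact hσ0 hεk.symm
            · rw [hεk, hchild] at hle; omega
          subst hkN
          have hAj : Aset H ε (p+2) = Set.Ico (0:ℝ) 1 ∩ Function.support (H.h (p+3)) := by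
            rw [hAform, hsupp, hεk]
          by_cases hεn : ε (p+3) = 1 ∨ ε (p+3) = -1
          · have hC2 : C ε (p+3) = some (p+3) := by
              rw [C_step_some ε p k hC1, ← hk, ← hσdef, if_pos hεk, if_pos hεn]
            constructor
            · intro h; rw [hC2] at h; cases h
            · intro N' hN'
              rw [hC2] at hN'
              injection hN' with hNn
              subst hNn
              constructor
              · rw [hAsucc, hAj, Set.inter_assoc]
                congr 1
                apply Set.inter_eq_right.2
                intro t ht
                rw [Set.mem_setOf_eq] at ht
                rw [Function.mem_support, ht]
                rcases hεn with h | h <;> rw [h] <;> norm_num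
              · refine ⟨by omega, le_rfl, fun h => by omega, fun _ => hεn, ?_, ?_⟩
                · show p+3 < childOf (p+3) (ε (p+3))
                  rw [childOf, if_neg (by omega)]
                  split <;> omega
                · intro m h1 h2 h3
                  by_cases hmN : m = k
                  · subst hmN
                    right
                    rw [hεk]
                    exact ⟨hσval, by rw [hchild]⟩
                  · rcases hNall m h1 (by omega) hmN with h0 | ⟨hv, hle⟩
                    · exact Or.inl h0
                    · exact Or.inr ⟨hv, by omega⟩
          · have hC2 : C ε (p+3) = none := by
              rw [C_step_some ε p k hC1, ← hk, ← hσdef, if_pos hεk, if_neg hεn]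
            refine ⟨fun _ => ?_, fun N' hN' => by rw [hC2] at hN'; cases hN'⟩
            rw [hAsucc, hAj]
            ext t
            simp only [Set.mem_inter_iff, Set.mem_setOf_eq, Set.mem_empty_iff_false, iff_false,
              not_and]
            rintro ⟨_, ht2⟩
            rw [Function.mem_support] at ht2
            rcases H.vals (p+3) t with e | e | e
            · exact (ht2 e).elim
            · rw [e]; intro h; exact hεn (Or.inl h.symm)
            · rw [e]; intro h; exact hεn (Or.inr h.symm)
        -- parent of p+3 is not active with the matching sign
        · have hAdisj : Aset H ε (p+2) ⊆ {t | H.h (p+3) t = 0} := by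
            intro t ht
            have hkt : H.h k t = ε k := ((mem_Aset H).1 ht).2 k (by omega) hkj
            rw [Set.mem_setOf_eq]
            by_contra hne
            have hts : t ∈ Function.support (H.h (p+3)) := hne
            rw [hsupp, Set.mem_setOf_eq, hkt] at hts
            exact hεk hts
          by_cases hεn : ε (p+3) = 0
          · have hC2 : C ε (p+3) = some N := by
              rw [C_step_some ε p N hC1, ← hk, ← hσdef, if_neg hεk, if_pos hεn]
            constructor
            · intro h; rw [hC2] at h; cases h
            · intro N' hN'
              rw [hC2] at hN'
              injection hN' with hNn
              subst hNn
              have hAeq : Aset H ε (p+3) = Aset H ε (p+2) := by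
                rw [hAsucc]
                apply Set.inter_eq_left.2
                intro t ht
                rw [Set.mem_setOf_eq, hεn]
                exact hAdisj ht
              constructor
              · rw [hAeq, hAform]
              · refine ⟨hNge, by omega, hN1, hN2, ?_, ?_⟩
                · rcases Nat.lt_or_ge (p+3) (childOf N (ε N)) with h | h
                  · exact h
                  · exfalso
                    have heq : childOf N (ε N) = p+3 := by omega
                    by_cases hNone : N = 1
                    · rw [hNone, childOf, if_pos le_rfl] at heq; omega
                    · have hNval := hN2 (by omega)
                      rw [childOf, if_neg (by omega)] at heq
                      apply hεk
                      rcases hNval with hv | hv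
                      · rw [if_pos hv] at heq
                        have hkeq : k = N := by omega
                        have hpar : (p+3) % 2 = 1 := by omega
                        rw [hkeq, hv, hσdef, hpar]
                        norm_num
                      · have hv1 : ¬ (ε N = 1) := by rw [hv]; norm_num
                        rw [if_neg hv1] at heq
                        have hkeq : k = N := by omega
                        have hpar : (p+3) % 2 = 0 := by omega
                        rw [hkeq, hv, hσdef, hpar]
                        norm_num
                · intro m h1 h2 h3
                  by_cases hmn : m = p+3
                  · subst hmn; exact Or.inl hεn
                  · rcases hNall m h1 (by omega) h3 with h0 | ⟨hv, hle⟩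
                    · exact Or.inl h0
                    · exact Or.inr ⟨hv, by omega⟩
          · have hC2 : C ε (p+3) = none := by
              rw [C_step_some ε p N hC1, ← hk, ← hσdef, if_neg hεk, if_neg hεn]
            refine ⟨fun _ => ?_, fun N' hN' => by rw [hC2] at hN'; cases hN'⟩
            rw [hAsucc]
            ext t
            simp only [Set.mem_inter_iff, Set.mem_setOf_eq, Set.mem_empty_iff_false, iff_false,
              not_and]
            intro ht
            have h0 := hAdisj ht
            rw [Set.mem_setOf_eq] at h0
            rw [h0]
            intro h
            exact hεn h.symm

end
end FHSproof

namespace FHSproof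
noncomputable section
open scoped Classical

variable (H : FaithfulHaarSystem)

lemma vol_Aset (j : ℕ) (hj : 1 ≤ j) (ε : ℕ → ℝ) : volume (Aset H ε j) = ν ε j := by
  obtain ⟨hnone, hsome⟩ := main_induction H j hj ε
  rcases hC : C ε j with _ | N
  · simp only [ν, hC]
    rw [hnone hC]
    exact measure_empty
  · obtain ⟨hA, hgood⟩ := hsome N hC
    simp only [ν, hC]
    by_cases hN1 : N = 1
    · subst hN1
      rw [if_pos rfl, hA, hgood.2.2.1 rfl]
      have : Set.Ico (0:ℝ) 1 ∩ {t | H.h 1 t = 1} = Set.Ico (0:ℝ) 1 := by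
        apply Set.inter_eq_left.2
        intro t ht
        rw [Set.mem_setOf_eq, H.one, Set.indicator_of_mem ht]
      rw [this, Real.volume_Ico]
      norm_num
    · rw [if_neg hN1]
      have hN2 : 2 ≤ N := by have := hgood.1; omega
      have hval := hgood.2.2.2.1 hN2
      have hval0 : ε N ≠ 0 := by rcases hval with h | h <;> rw [h] <;> norm_num
      rw [hA]
      have : Set.Ico (0:ℝ) 1 ∩ {t | H.h N t = ε N} = {t | H.h N t = ε N} := by
        apply Set.inter_eq_right.2
        exact (level_subset H N (ε N) hval0).trans (supp_subset H N (by omega))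
      rw [this]
      exact vol_level H N hN2 (ε N) hval

def vcode : Fin 3 → ℝ := ![0, 1, -1]

def code (x : ℝ) : Fin 3 := if x = 1 then 1 else if x = -1 then 2 else 0

lemma vcode_code {x : ℝ} (h : x = 0 ∨ x = 1 ∨ x = -1) : vcode (code x) = x := by
  rcases h with h | h | h <;> subst h <;> simp [code, vcode] <;> norm_num <;> rfl

lemma vcode_inj : Function.Injective vcode := by
  intro a b h
  fin_cases a <;> fin_cases b <;> simp [vcode] at h ⊢ <;> norm_num at h

def patt (j : ℕ) (e : Fin j → Fin 3) : ℕ → ℝ :=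
  fun i => if h : 1 ≤ i ∧ i ≤ j then vcode (e ⟨i-1, by omega⟩) else 0

lemma patt_eq (j : ℕ) (e : Fin j → Fin 3) (i : ℕ) (h1 : 1 ≤ i) (h2 : i ≤ j) :
    patt j e i = vcode (e ⟨i-1, by omega⟩) := dif_pos ⟨h1, h2⟩

lemma patt_fin (j : ℕ) (e : Fin j → Fin 3) (i : Fin j) :
    patt j e (i.val+1) = vcode (e i) := by
  rw [patt_eq j e (i.val+1) (by omega) (by omega)]
  have : (⟨i.val+1-1, by omega⟩ : Fin j) = i := Fin.ext (by simp)
  rw [this]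

lemma key (j : ℕ) (hj : 1 ≤ j) (ξ : ℕ → ℝ) (B : Set ℝ) (hB : MeasurableSet B) :
    mu01 ((fun t => ∑ i ∈ Finset.Icc 1 j, ξ i * H.h i t) ⁻¹' B) =
      ∑ e : Fin j → Fin 3,
        (if (∑ i ∈ Finset.Icc 1 j, ξ i * patt j e i) ∈ B then ν (patt j e) j else 0) := by
  set f : ℝ → ℝ := fun t => ∑ i ∈ Finset.Icc 1 j, ξ i * H.h i t with hf
  have hfmeas : Measurable f :=
    Finset.measurable_sum _ (fun i _ => (measurable_const.mul (H.meas i)))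
  rw [mu01, Measure.restrict_apply (hfmeas hB)]
  have hconst : ∀ e : Fin j → Fin 3, ∀ t ∈ Aset H (patt j e) j,
      f t = ∑ i ∈ Finset.Icc 1 j, ξ i * patt j e i := by
    intro e t ht
    apply Finset.sum_congr rfl
    intro i hi
    rw [Finset.mem_Icc] at hi
    rw [((mem_Aset H).1 ht).2 i hi.1 hi.2]
  have hcover : f ⁻¹' B ∩ Set.Ico 0 1
      = ⋃ e : Fin j → Fin 3, (f ⁻¹' B ∩ Aset H (patt j e) j) := by
    ext t
    simp only [Set.mem_iUnion, Set.mem_inter_iff]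
    constructor
    · rintro ⟨htB, htI⟩
      refine ⟨fun i => code (H.h (i.val+1) t), htB, ?_⟩
      rw [mem_Aset]
      refine ⟨htI, fun i h1 h2 => ?_⟩
      have hi : i = (⟨i-1, by omega⟩ : Fin j).val + 1 := by simp; omega
      rw [patt_eq j _ i h1 h2]
      rw [show (⟨i-1, by omega⟩ : Fin j) = ⟨i-1, by omega⟩ from rfl]
      have : H.h ((⟨i-1, by omega⟩ : Fin j).val + 1) t = H.h i t := by
        congr 1; simp; omega
      rw [vcode_code (by rw [this]; exact H.vals i t)]
      rw [this]
    · rintro ⟨e, htB, htA⟩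
      exact ⟨htB, ((mem_Aset H).1 htA).1⟩
  rw [hcover]
  have hdisj : Pairwise (Function.onFun Disjoint
      (fun e : Fin j → Fin 3 => f ⁻¹' B ∩ Aset H (patt j e) j)) := by
    intro e1 e2 hne
    rw [Function.onFun]
    rw [Set.disjoint_left]
    rintro t ⟨_, ht1⟩ ⟨_, ht2⟩
    obtain ⟨i0, hi0⟩ := Function.ne_iff.1 hne
    have m1 := ((mem_Aset H).1 ht1).2 (i0.val+1) (by omega) (by omega)
    have m2 := ((mem_Aset H).1 ht2).2 (i0.val+1) (by omega) (by omega)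
    rw [patt_fin] at m1 m2
    exact hi0 (vcode_inj (m1.symm.trans m2))
  rw [measure_iUnion hdisj
    (fun e => (hfmeas hB).inter (measurable_Aset H (patt j e) j)), tsum_fintype]
  apply Finset.sum_congr rfl
  intro e _
  by_cases hc : (∑ i ∈ Finset.Icc 1 j, ξ i * patt j e i) ∈ B
  · rw [if_pos hc, ← vol_Aset H j hj (patt j e)]
    congr 1
    apply Set.inter_eq_right.2
    intro t ht
    rw [Set.mem_preimage, hconst e t ht]
    exact hc
  · rw [if_neg hc]
    have : f ⁻¹' B ∩ Aset H (patt j e) j = ∅ := by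
      ext t
      simp only [Set.mem_inter_iff, Set.mem_preimage, Set.mem_empty_iff_false, iff_false, not_and]
      intro htB htA
      rw [hconst e t htA] at htB
      exact hc htB
    rw [this, measure_empty]

end
end FHSproof


/-- Let `(h̃_j)` be a faithful Haar system. Then for every `j ≥ 1` and all
real scalars `ξ_1, …, ξ_j`, the functions `f_j = ∑_{i=1}^j ξ_i h_i` and
`g_j = ∑_{i=1}^j ξ_i h̃_i` have the same distribution with respect to Lebesgue measure
on `[0,1)`: for every Borel set `B ⊆ ℝ`, `λ(f_j⁻¹(B) ∩ [0,1)) = λ(g_j⁻¹(B) ∩ [0,1))`. -/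
theorem faithful_haar_sum_same_distribution
    (H : FaithfulHaarSystem) (j : ℕ) (hj : 1 ≤ j) (ξ : ℕ → ℝ)
    (B : Set ℝ) (hB : MeasurableSet B) :
    mu01 ((fun t => ∑ i ∈ Finset.Icc 1 j, ξ i * haarN i t) ⁻¹' B) =
      mu01 ((fun t => ∑ i ∈ Finset.Icc 1 j, ξ i * H.h i t) ⁻¹' B) := by
  have h1 : haarN = FHSproof.stdFHS.h := rfl
  rw [h1, FHSproof.key FHSproof.stdFHS j hj ξ B hB, FHSproof.key H j hj ξ B hB]
end

section
/- Let 1 ≤ p < ∞ and let (h̃_j)_{j≥1} be a faithful Haar system. Then (h_j) and (h̃_j) are isometrically equivalent in L^p([0,1)): for every j ≥ 1 and all real scalars ξ_1, …, ξ_j, ‖Σ_{i=1}^j ξ_i·h̃_i‖_{L^p([0,1))} = ‖Σ_{i=1}^j ξ_i·h_i‖_{L^p([0,1))}. -/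
open MeasureTheory Set Function Filter
open scoped ENNReal

noncomputable section

namespace FHS

instance : IsFiniteMeasure mu01 := by
  constructor; simp [mu01, Real.volume_Ico]


lemma haarD_eq_one {m i : ℕ} {t : ℝ}
    (ht : t ∈ Set.Ico ((2*i : ℝ)/2^(m+1)) ((2*i+1 : ℝ)/2^(m+1))) : haarD m i t = 1 := by
  have h2 : t ∉ Set.Ico ((2*i+1 : ℝ)/2^(m+1)) ((2*i+2 : ℝ)/2^(m+1)) := by
    intro h; exact absurd ht.2 (not_lt.2 h.1)
  simp [haarD, indicator_of_mem ht, indicator_of_notMem h2]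

lemma haarD_eq_neg_one {m i : ℕ} {t : ℝ}
    (ht : t ∈ Set.Ico ((2*i+1 : ℝ)/2^(m+1)) ((2*i+2 : ℝ)/2^(m+1))) : haarD m i t = -1 := by
  have h2 : t ∉ Set.Ico ((2*i : ℝ)/2^(m+1)) ((2*i+1 : ℝ)/2^(m+1)) := by
    intro h; exact absurd h.2 (not_lt.2 ht.1)
  simp [haarD, indicator_of_mem ht, indicator_of_notMem h2]

lemma haarD_eq_zero {m i : ℕ} {t : ℝ}
    (h1 : t ∉ Set.Ico ((2*i : ℝ)/2^(m+1)) ((2*i+1 : ℝ)/2^(m+1)))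
    (h2 : t ∉ Set.Ico ((2*i+1 : ℝ)/2^(m+1)) ((2*i+2 : ℝ)/2^(m+1))) : haarD m i t = 0 := by
  simp [haarD, indicator_of_notMem h1, indicator_of_notMem h2]

lemma union_halves (m i : ℕ) :
    Set.Ico ((2*i : ℝ)/2^(m+1)) ((2*i+1 : ℝ)/2^(m+1))
      ∪ Set.Ico ((2*i+1 : ℝ)/2^(m+1)) ((2*i+2 : ℝ)/2^(m+1))
      = Set.Ico ((i : ℝ)/2^m) ((i+1 : ℝ)/2^m) := by
  have e1 : ((2*i : ℝ)/2^(m+1)) = (i : ℝ)/2^m := by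
    rw [pow_succ]; ring
  have e2 : ((2*i+2 : ℝ)/2^(m+1)) = ((i : ℝ)+1)/2^m := by
    rw [pow_succ]; ring
  rw [Set.Ico_union_Ico_eq_Ico (by gcongr <;> linarith) (by gcongr <;> linarith), e1, e2]

lemma support_haarD (m i : ℕ) :
    Function.support (haarD m i) = Set.Ico ((i : ℝ)/2^m) ((i+1 : ℝ)/2^m) := by
  rw [← union_halves]
  ext t
  simp only [Function.mem_support]
  constructor
  · intro h
    by_contra hc
    rw [Set.mem_union] at hc
    push_neg at hc
    exact h (haarD_eq_zero hc.1 hc.2)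
  · rintro (h | h)
    · have h2 : t ∉ Set.Ico ((2*i+1 : ℝ)/2^(m+1)) ((2*i+2 : ℝ)/2^(m+1)) := by
        intro hh; exact absurd h.2 (not_lt.2 hh.1)
      simp [haarD, indicator_of_mem h, indicator_of_notMem h2]
    · have h1 : t ∉ Set.Ico ((2*i : ℝ)/2^(m+1)) ((2*i+1 : ℝ)/2^(m+1)) := by
        intro hh; exact absurd hh.2 (not_lt.2 h.1)
      simp [haarD, indicator_of_mem h, indicator_of_notMem h1]

lemma integrable_ind (a b : ℝ) :
    Integrable ((Set.Ico a b).indicator (fun _ => (1:ℝ))) mu01 :=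
  (integrable_const (1:ℝ)).indicator measurableSet_Ico

lemma mu01_Ico (a b : ℝ) : mu01 (Set.Ico a b) = ENNReal.ofReal (min b 1 - max a 0) := by
  rw [mu01, Measure.restrict_apply measurableSet_Ico, Set.Ico_inter_Ico, Real.volume_Ico]

lemma integrable_haarD (m i : ℕ) : Integrable (haarD m i) mu01 :=
  (integrable_ind _ _).sub (integrable_ind _ _)

lemma integral_haarD (m i : ℕ) : ∫ t, haarD m i t ∂mu01 = 0 := by
  have h := integral_sub (integrable_ind ((2*i : ℝ)/2^(m+1)) ((2*i+1 : ℝ)/2^(m+1)))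
    (integrable_ind ((2*i+1 : ℝ)/2^(m+1)) ((2*i+2 : ℝ)/2^(m+1)))
  rw [show (fun t => ((Set.Ico ((2*i : ℝ)/2^(m+1)) ((2*i+1 : ℝ)/2^(m+1))).indicator (fun _ => (1:ℝ)) t
      - (Set.Ico ((2*i+1 : ℝ)/2^(m+1)) ((2*i+2 : ℝ)/2^(m+1))).indicator (fun _ => (1:ℝ)) t)) = haarD m i from rfl] at h
  rw [h, integral_indicator_const (1:ℝ) measurableSet_Ico,
    integral_indicator_const (1:ℝ) measurableSet_Ico]
  have hmeq : mu01 (Set.Ico ((2*i : ℝ)/2^(m+1)) ((2*i+1 : ℝ)/2^(m+1)))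
      = mu01 (Set.Ico ((2*i+1 : ℝ)/2^(m+1)) ((2*i+2 : ℝ)/2^(m+1))) := by
    rw [mu01_Ico, mu01_Ico]
    have hq : (0:ℝ) < 2^(m+1) := by positivity
    have ha : (0:ℝ) ≤ (2*i : ℝ)/2^(m+1) := by positivity
    have hb : (0:ℝ) ≤ (2*i+1 : ℝ)/2^(m+1) := by positivity
    rw [max_eq_left ha, max_eq_left hb]
    by_cases hi : i < 2^m
    · have hi' : (i:ℝ) ≤ 2^m - 1 := by
        have : (i:ℝ) + 1 ≤ 2^m := by exact_mod_cast Nat.succ_le_of_lt hi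
        linarith
      have h2m : ((2:ℝ)^(m+1)) = 2 * 2^m := by rw [pow_succ]; ring
      have hble : (2*i+1 : ℝ)/2^(m+1) ≤ 1 := by
        rw [div_le_one hq, h2m]; linarith
      have hcle : (2*i+2 : ℝ)/2^(m+1) ≤ 1 := by
        rw [div_le_one hq, h2m]; linarith
      rw [min_eq_left hble, min_eq_left hcle]
      congr 1
      field_simp
      ring
    · push_neg at hi
      have hi' : ((2:ℝ)^m) ≤ i := by exact_mod_cast hi
      have h2m : ((2:ℝ)^(m+1)) = 2 * 2^m := by rw [pow_succ]; ring
      have ha1 : (1:ℝ) ≤ (2*i : ℝ)/2^(m+1) := by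
        rw [le_div_iff₀ hq, h2m]; linarith
      have hb1 : (1:ℝ) ≤ (2*i+1 : ℝ)/2^(m+1) := by
        rw [le_div_iff₀ hq, h2m]; linarith
      rw [ENNReal.ofReal_eq_zero.2, ENNReal.ofReal_eq_zero.2]
      · have := min_le_right ((2*i+2 : ℝ)/2^(m+1)) 1; linarith
      · have := min_le_right ((2*i+1 : ℝ)/2^(m+1)) 1; linarith
  rw [measureReal_def, measureReal_def, hmeq]
  ring


variable (H : FaithfulHaarSystem)

/-- The support of the `n`-th function. -/
def E (n : ℕ) : Set ℝ := Function.support (H.h n)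

lemma measE (n : ℕ) : MeasurableSet (E H n) := by
  rw [E, Function.support_eq_preimage]
  exact (H.meas n) (measurableSet_singleton 0).compl

lemma E_two : E H 2 = Set.Ico (0:ℝ) 1 := H.supp_two

lemma E_odd {n : ℕ} (hn : 2 ≤ n) : E H (2*n-1) = {t | H.h n t = 1} := H.supp_odd n hn

lemma E_even {n : ℕ} (hn : 2 ≤ n) : E H (2*n) = {t | H.h n t = -1} := H.supp_even n hn

lemma disj_children {n : ℕ} (hn : 2 ≤ n) : Disjoint (E H (2*n-1)) (E H (2*n)) := by
  rw [E_odd H hn, E_even H hn, Set.disjoint_left]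
  intro t h1 h2
  simp only [Set.mem_setOf_eq] at h1 h2
  rw [h1] at h2; norm_num at h2

lemma union_children {n : ℕ} (hn : 2 ≤ n) : E H (2*n-1) ∪ E H (2*n) = E H n := by
  rw [E_odd H hn, E_even H hn]
  ext t
  simp only [Set.mem_union, Set.mem_setOf_eq, E, Function.mem_support]
  rcases H.vals n t with h | h | h <;> simp [h]

lemma h_eq_ind {n : ℕ} (hn : 2 ≤ n) : H.h n = fun t =>
    (E H (2*n-1)).indicator (fun _ => (1:ℝ)) t - (E H (2*n)).indicator (fun _ => (1:ℝ)) t := by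
  funext t
  rw [E_odd H hn, E_even H hn]
  rcases H.vals n t with h | h | h <;>
    simp [h, Set.indicator_apply, Set.mem_setOf_eq] <;> norm_num

lemma integral_h_zero {n : ℕ} (hn : 2 ≤ n) : ∫ t, H.h n t ∂mu01 = 0 := by
  obtain ⟨S, c, hS⟩ := H.mem_span n hn
  rw [hS]
  rw [integral_finset_sum S (fun q _ => (integrable_haarD q.1 q.2).const_mul (c q))]
  simp_rw [integral_const_mul]
  simp [integral_haarD]

lemma mu_children {n : ℕ} (hn : 2 ≤ n) :
    mu01 (E H (2*n-1)) = mu01 (E H n) / 2 ∧ mu01 (E H (2*n)) = mu01 (E H n) / 2 := by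
  have hint := integral_h_zero H hn
  rw [h_eq_ind H hn] at hint
  rw [integral_sub ((integrable_const (1:ℝ)).indicator (measE H _))
    ((integrable_const (1:ℝ)).indicator (measE H _)),
    integral_indicator_const (1:ℝ) (measE H _), integral_indicator_const (1:ℝ) (measE H _)] at hint
  simp only [smul_eq_mul, mul_one] at hint
  have heq : mu01 (E H (2*n-1)) = mu01 (E H (2*n)) := by
    have h1 := measure_ne_top mu01 (E H (2*n-1))
    have h2 := measure_ne_top mu01 (E H (2*n))
    exact (ENNReal.toReal_eq_toReal_iff' h1 h2).mp (by simp only [measureReal_def] at hint; linarith)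
  have hadd : mu01 (E H (2*n-1)) + mu01 (E H (2*n)) = mu01 (E H n) := by
    rw [← measure_union (disj_children H hn) (measE H _), union_children H hn]
  have h2a : 2 * mu01 (E H (2*n-1)) = mu01 (E H n) := by
    rw [two_mul]; nth_rewrite 2 [heq]; exact hadd
  constructor
  · rw [ENNReal.eq_div_iff (two_ne_zero) (ENNReal.ofNat_ne_top)]; exact h2a
  · rw [← heq, ENNReal.eq_div_iff (two_ne_zero) (ENNReal.ofNat_ne_top)]; exact h2a


/-- `w n = 2^{-⌊log₂(n-1)⌋}`, the measure of `E n` for `n ≥ 2`. -/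
def w (n : ℕ) : ℝ≥0∞ := ((2:ℝ≥0∞)^(Nat.log 2 (n-1)))⁻¹

lemma log_odd {k : ℕ} (hk : 2 ≤ k) : Nat.log 2 (2*k-2) = Nat.log 2 (k-1) + 1 := by
  have h : 2*k-2 = (k-1)*2 := by omega
  rw [h, Nat.log_mul_base (by norm_num) (by omega)]

lemma log_even {k : ℕ} (hk : 2 ≤ k) : Nat.log 2 (2*k-1) = Nat.log 2 (k-1) + 1 := by
  have h1 : 2^(Nat.log 2 (k-1)) ≤ k-1 := Nat.pow_log_le_self 2 (by omega)
  have h2 : k-1 < 2^(Nat.log 2 (k-1)+1) := Nat.lt_pow_succ_log_self (by norm_num) _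
  apply Nat.log_eq_of_pow_le_of_lt_pow
  · rw [pow_succ]; omega
  · rw [pow_succ]; omega

lemma w_two : w 2 = 1 := by simp [w]

lemma w_odd {k : ℕ} (hk : 2 ≤ k) : w (2*k-1) = w k / 2 := by
  rw [w, w, show 2*k-1-1 = 2*k-2 by omega, log_odd hk, pow_succ,
    ENNReal.mul_inv (by simp) (by simp), ENNReal.div_eq_inv_mul, mul_comm]

lemma w_even {k : ℕ} (hk : 2 ≤ k) : w (2*k) = w k / 2 := by
  rw [w, w, show 2*k-1 = 2*k-1 by rfl, log_even hk, pow_succ,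
    ENNReal.mul_inv (by simp) (by simp), ENNReal.div_eq_inv_mul, mul_comm]

lemma mu_E : ∀ n, 2 ≤ n → mu01 (E H n) = w n := by
  intro n
  induction n using Nat.strong_induction_on with
  | _ n ih =>
    intro hn
    rcases eq_or_lt_of_le hn with h2 | h3
    · rw [← h2, E_two, w_two, mu01, Measure.restrict_apply measurableSet_Ico,
        Set.inter_self, Real.volume_Ico]
      norm_num
    · -- n ≥ 3; let m = (n+1)/2; n = 2m-1 or n = 2m
      set m := (n+1)/2 with hm
      have hm2 : 2 ≤ m := by omega
      have hmn : m < n := by omega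
      have hmu : mu01 (E H m) = w m := ih m hmn hm2
      rcases Nat.even_or_odd n with he | ho
      · have hne : n = 2*m := by obtain ⟨r, hr⟩ := he; omega
        rw [hne, (mu_children H hm2).2, hmu, w_even hm2]
      · have hno : n = 2*m-1 := by obtain ⟨r, hr⟩ := ho; omega
        rw [hno, (mu_children H hm2).1, hmu, w_odd hm2]

lemma partition : ∀ j, 1 ≤ j →
    (Set.Ico (0:ℝ) 1 = ⋃ n ∈ Finset.Icc (j+1) (2*j), E H n) ∧
      ((Finset.Icc (j+1) (2*j) : Set ℕ).PairwiseDisjoint (E H)) := by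
  intro j hj
  induction j, hj using Nat.le_induction with
  | base =>
    constructor
    · simp [E_two H]
    · simp [Set.PairwiseDisjoint, Set.Pairwise]
  | succ j hj ih =>
    obtain ⟨ihu, ihd⟩ := ih
    have hj2 : 2 ≤ j + 1 := by omega
    have hsplit : E H (2*(j+1)-1) ∪ E H (2*(j+1)) = E H (j+1) := union_children H hj2
    have hdisC : Disjoint (E H (2*(j+1)-1)) (E H (2*(j+1))) := disj_children H hj2
    have hsub1 : E H (2*(j+1)-1) ⊆ E H (j+1) := by rw [← hsplit]; exact Set.subset_union_left
    have hsub2 : E H (2*(j+1)) ⊆ E H (j+1) := by rw [← hsplit]; exact Set.subset_union_right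
    constructor
    · rw [ihu]
      ext t
      simp only [Set.mem_iUnion, Finset.mem_Icc, exists_prop]
      constructor
      · rintro ⟨n, ⟨h1, h2⟩, ht⟩
        rcases eq_or_lt_of_le h1 with heq | hlt
        · rw [← heq] at ht
          rw [← hsplit] at ht
          rcases ht with ht | ht
          · exact ⟨2*(j+1)-1, by omega, ht⟩
          · exact ⟨2*(j+1), by omega, ht⟩
        · exact ⟨n, by omega, ht⟩
      · rintro ⟨n, ⟨h1, h2⟩, ht⟩
        rcases Nat.lt_or_ge n (2*j+1) with hlt | hge
        · exact ⟨n, by omega, ht⟩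
        · have : n = 2*(j+1)-1 ∨ n = 2*(j+1) := by omega
          rcases this with rfl | rfl
          · exact ⟨j+1, by omega, hsub1 ht⟩
          · exact ⟨j+1, by omega, hsub2 ht⟩
    · intro a ha b hb hab
      simp only [Finset.coe_Icc, Set.mem_Icc] at ha hb
      have key : ∀ c, j + 2 ≤ c → c ≤ 2*j → Disjoint (E H c) (E H (j+1)) := by
        intro c hc1 hc2
        exact ihd (by simp; omega) (by simp; omega) (by omega)
      have hnew : ∀ c, j + 2 ≤ c → c ≤ 2*j →
          Disjoint (E H c) (E H (2*(j+1)-1)) ∧ Disjoint (E H c) (E H (2*(j+1))) := by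
        intro c hc1 hc2
        exact ⟨(key c hc1 hc2).mono_right hsub1, (key c hc1 hc2).mono_right hsub2⟩
      rcases Nat.lt_or_ge a (2*j+1) with halt | hage <;> rcases Nat.lt_or_ge b (2*j+1) with hblt | hbge
      · exact ihd (by simp; omega) (by simp; omega) hab
      · have : b = 2*(j+1)-1 ∨ b = 2*(j+1) := by omega
        rcases this with rfl | rfl
        · exact (hnew a (by omega) (by omega)).1
        · exact (hnew a (by omega) (by omega)).2
      · have : a = 2*(j+1)-1 ∨ a = 2*(j+1) := by omega
        rcases this with rfl | rfl
        · exact ((hnew b (by omega) (by omega)).1).symm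
        · exact ((hnew b (by omega) (by omega)).2).symm
      · have ha' : a = 2*(j+1)-1 ∨ a = 2*(j+1) := by omega
        have hb' : b = 2*(j+1)-1 ∨ b = 2*(j+1) := by omega
        rcases ha' with rfl | rfl <;> rcases hb' with rfl | rfl
        · omega
        · exact hdisC
        · exact hdisC.symm
        · omega


end FHS

/-- The (system-independent) constant value of `h i` on the atom `E n`, for `1 ≤ i < n`. -/
def FHS.sgn (i : ℕ) : ℕ → ℝ
  | n =>
    if h : n ≤ 2 then 1
    else if i = (n+1)/2 then (if n % 2 = 1 then 1 else -1)
    else if i < (n+1)/2 then FHS.sgn i ((n+1)/2)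
    else 0
  termination_by n => n
  decreasing_by omega

namespace FHS

lemma sgn_two (i : ℕ) : sgn i 2 = 1 := by rw [sgn]; norm_num

lemma sgn_self {i n : ℕ} (h3 : 3 ≤ n) (h : i = (n+1)/2) :
    sgn i n = if n % 2 = 1 then 1 else -1 := by
  rw [sgn]; rw [dif_neg (by omega), if_pos h]

lemma sgn_lt {i n : ℕ} (h3 : 3 ≤ n) (h : i < (n+1)/2) : sgn i n = sgn i ((n+1)/2) := by
  rw [sgn]; rw [dif_neg (by omega), if_neg (by omega), if_pos h]

lemma sgn_gt {i n : ℕ} (h3 : 3 ≤ n) (h : (n+1)/2 < i) : sgn i n = 0 := by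
  rw [sgn]; rw [dif_neg (by omega), if_neg (by omega), if_neg (by omega)]

variable (H : FaithfulHaarSystem)

lemma h_one_eq {t : ℝ} (ht : t ∈ Set.Ico (0:ℝ) 1) : H.h 1 t = 1 := by
  rw [H.one, indicator_of_mem ht]

lemma E_subset {n : ℕ} (hn : 2 ≤ n) : E H n ⊆ Set.Ico (0:ℝ) 1 := by
  obtain ⟨hu, -⟩ := partition H (n-1) (by omega)
  rw [hu]
  intro t ht
  simp only [Set.mem_iUnion, exists_prop]
  exact ⟨n, Finset.mem_Icc.mpr ⟨by omega, by omega⟩, ht⟩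

lemma sign_lemma : ∀ n, 2 ≤ n → ∀ i, 1 ≤ i → i < n → ∀ t ∈ E H n, H.h i t = sgn i n := by
  intro n
  induction n using Nat.strong_induction_on with
  | _ n ih =>
    intro hn i hi1 hin t ht
    rcases eq_or_lt_of_le hn with h2 | h3
    · -- n = 2, i = 1
      subst h2
      have hi : i = 1 := by omega
      rw [hi, sgn_two, h_one_eq H (by rw [← E_two H]; exact ht)]
    · set m := (n+1)/2 with hm
      have hm2 : 2 ≤ m := by omega
      have hmn : m < n := by omega
      -- t belongs to E H m and H.h m t = ±1
      have hcase : (n = 2*m-1 ∧ H.h m t = 1) ∨ (n = 2*m ∧ H.h m t = -1) := by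
        rcases Nat.even_or_odd n with he | ho
        · right
          have hne : n = 2*m := by obtain ⟨r, hr⟩ := he; omega
          refine ⟨hne, ?_⟩
          have := ht; rw [hne, E_even H hm2] at this; exact this
        · left
          have hno : n = 2*m-1 := by obtain ⟨r, hr⟩ := ho; omega
          refine ⟨hno, ?_⟩
          have := ht; rw [hno, E_odd H hm2] at this; exact this
      have htm : t ∈ E H m := by
        rcases hcase with ⟨-, hv⟩ | ⟨-, hv⟩ <;>
          · rw [E, Function.mem_support, hv]; norm_num
      rcases lt_trichotomy i m with hilt | hie | higt
      · -- i < m : recurse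
        rw [sgn_lt (by omega) hilt, ← hm]
        exact ih m hmn hm2 i hi1 hilt t htm
      · -- i = m
        rw [hie, sgn_self (by omega) rfl]
        rcases hcase with ⟨hno, hv⟩ | ⟨hne, hv⟩
        · rw [if_pos (by omega), hv]
        · rw [if_neg (by omega), hv]
      · -- m < i < n : h i vanishes on E n
        rw [sgn_gt (by omega) higt]
        have hi2 : 2 ≤ i := by omega
        obtain ⟨-, hd⟩ := partition H (i-1) (by omega)
        have hdisj : Disjoint (E H i) (E H n) := by
          apply hd (by simp; omega) (by simp; omega) (by omega)
        have : t ∉ E H i := Set.disjoint_right.mp hdisj ht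
        rw [E, Function.mem_support, not_not] at this
        exact this

lemma main_formula (p : ℝ≥0∞) (hp : 1 ≤ p) (hptop : p ≠ ∞)
    (j : ℕ) (hj : 1 ≤ j) (ξ : ℕ → ℝ) :
    eLpNorm (fun t => ∑ i ∈ Finset.Icc 1 j, ξ i * H.h i t) p mu01 =
      (∑ n ∈ Finset.Icc (j+1) (2*j),
        (‖∑ i ∈ Finset.Icc 1 j, ξ i * sgn i n‖₊ : ℝ≥0∞) ^ p.toReal * w n) ^ (1/p.toReal) := by
  have hp0 : p ≠ 0 := by
    intro h; rw [h] at hp; exact absurd hp (by simp)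
  rw [eLpNorm_eq_lintegral_rpow_enorm_toReal hp0 hptop]
  simp only [enorm_eq_nnnorm]
  congr 1
  obtain ⟨hu, hd⟩ := partition H j hj
  have hres : mu01 = mu01.restrict (Set.Ico (0:ℝ) 1) := by
    rw [mu01, Measure.restrict_restrict measurableSet_Ico, Set.inter_self]
  rw [hres, hu]
  rw [lintegral_biUnion_finset hd (fun n _ => measE H n)]
  apply Finset.sum_congr rfl
  intro n hn
  rw [Finset.mem_Icc] at hn
  have hn2 : 2 ≤ n := by omega
  have step1 : ∫⁻ t in E H n, (‖∑ i ∈ Finset.Icc 1 j, ξ i * H.h i t‖₊ : ℝ≥0∞) ^ p.toReal ∂mu01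
      = ∫⁻ _ in E H n, (‖∑ i ∈ Finset.Icc 1 j, ξ i * sgn i n‖₊ : ℝ≥0∞) ^ p.toReal ∂mu01 := by
    apply setLIntegral_congr_fun (measE H n)
    intro t ht
    have : (∑ i ∈ Finset.Icc 1 j, ξ i * H.h i t) = ∑ i ∈ Finset.Icc 1 j, ξ i * sgn i n := by
      apply Finset.sum_congr rfl
      intro i hi
      rw [Finset.mem_Icc] at hi
      rw [sign_lemma H n hn2 i hi.1 (by omega) t ht]
    simp only [this]
  rw [step1, setLIntegral_const, mu_E H n hn2]



lemma haarD_vals (m i : ℕ) (t : ℝ) : haarD m i t = 0 ∨ haarD m i t = 1 ∨ haarD m i t = -1 := by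
  by_cases h1 : t ∈ Set.Ico ((2*i : ℝ)/2^(m+1)) ((2*i+1 : ℝ)/2^(m+1))
  · exact Or.inr (Or.inl (haarD_eq_one h1))
  by_cases h2 : t ∈ Set.Ico ((2*i+1 : ℝ)/2^(m+1)) ((2*i+2 : ℝ)/2^(m+1))
  · exact Or.inr (Or.inr (haarD_eq_neg_one h2))
  · exact Or.inl (haarD_eq_zero h1 h2)

lemma haarD_one_set (m i : ℕ) :
    {t : ℝ | haarD m i t = 1} = Set.Ico ((2*i : ℝ)/2^(m+1)) ((2*i+1 : ℝ)/2^(m+1)) := by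
  ext t
  simp only [Set.mem_setOf_eq]
  constructor
  · intro h
    by_contra hc
    by_cases h2 : t ∈ Set.Ico ((2*i+1 : ℝ)/2^(m+1)) ((2*i+2 : ℝ)/2^(m+1))
    · rw [haarD_eq_neg_one h2] at h; norm_num at h
    · rw [haarD_eq_zero hc h2] at h; norm_num at h
  · exact haarD_eq_one

lemma haarD_neg_one_set (m i : ℕ) :
    {t : ℝ | haarD m i t = -1} = Set.Ico ((2*i+1 : ℝ)/2^(m+1)) ((2*i+2 : ℝ)/2^(m+1)) := by
  ext t
  simp only [Set.mem_setOf_eq]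
  constructor
  · intro h
    by_contra hc
    by_cases h1 : t ∈ Set.Ico ((2*i : ℝ)/2^(m+1)) ((2*i+1 : ℝ)/2^(m+1))
    · rw [haarD_eq_one h1] at h; norm_num at h
    · rw [haarD_eq_zero h1 hc] at h; norm_num at h
  · exact haarD_eq_neg_one

lemma measurable_haarD (m i : ℕ) : Measurable (haarD m i) :=
  (measurable_const.indicator measurableSet_Ico).sub
    (measurable_const.indicator measurableSet_Ico)

lemma haarN_eq_haarD {n : ℕ} (hn : 2 ≤ n) :
    haarN n = haarD (Nat.log 2 (n-1)) (n - 1 - 2^(Nat.log 2 (n-1))) := by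
  rw [haarN, if_neg (by omega)]

/-- The standard Haar system is a faithful Haar system. -/
def std : FaithfulHaarSystem where
  h := haarN
  meas := by
    intro n
    by_cases hn : n ≤ 1
    · rw [haarN, if_pos hn]; exact measurable_const.indicator measurableSet_Ico
    · rw [haarN, if_neg hn]; exact measurable_haarD _ _
  vals := by
    intro n t
    by_cases hn : n ≤ 1
    · rw [haarN, if_pos hn]
      by_cases ht : t ∈ Set.Ico (0:ℝ) 1
      · rw [indicator_of_mem ht]; tauto
      · rw [indicator_of_notMem ht]; tauto
    · rw [haarN, if_neg hn]; exact haarD_vals _ _ t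
  one := by rw [haarN]; norm_num
  mem_span := by
    intro n hn
    refine ⟨{(Nat.log 2 (n-1), n - 1 - 2^(Nat.log 2 (n-1)))}, fun _ => 1, ?_⟩
    funext t
    rw [haarN_eq_haarD hn]
    simp
  supp_two := by
    rw [haarN_eq_haarD le_rfl]
    norm_num [support_haarD]
  supp_odd := by
    intro k hk
    set m := Nat.log 2 (k-1) with hm
    have hpow : 2^m ≤ k-1 := Nat.pow_log_le_self 2 (by omega)
    have h1 : haarN (2*k-1) = haarD (m+1) (2*(k-1-2^m)) := by
      rw [haarN_eq_haarD (by omega), show 2*k-1-1 = 2*k-2 by omega, log_odd hk, ← hm,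
        show 2*k-2-2^(m+1) = 2*(k-1-2^m) by rw [pow_succ]; omega]
    rw [h1, haarN_eq_haarD hk, ← hm, support_haarD, haarD_one_set]
    have hc : ((2*(k-1-2^m) : ℕ) : ℝ) = 2*((k-1-2^m : ℕ) : ℝ) := by push_cast; ring
    rw [hc]
  supp_even := by
    intro k hk
    set m := Nat.log 2 (k-1) with hm
    have hpow : 2^m ≤ k-1 := Nat.pow_log_le_self 2 (by omega)
    have h1 : haarN (2*k) = haarD (m+1) (2*(k-1-2^m)+1) := by
      rw [haarN_eq_haarD (by omega), log_even hk, ← hm,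
        show 2*k-1-2^(m+1) = 2*(k-1-2^m)+1 by rw [pow_succ]; omega]
    rw [h1, haarN_eq_haarD hk, ← hm, support_haarD, haarD_neg_one_set]
    have hc : ((2*(k-1-2^m)+1 : ℕ) : ℝ) = 2*((k-1-2^m : ℕ) : ℝ) + 1 := by push_cast; ring
    rw [hc]
    congr 2
    ring
end FHS

end

/-- Let `1 ≤ p < ∞` and let `(h̃_j)` be a faithful Haar system. Then `(h_j)`
and `(h̃_j)` are isometrically equivalent in `L^p([0,1))`: for every `j ≥ 1` and all real
scalars `ξ_1, …, ξ_j`, `‖∑_{i=1}^j ξ_i h̃_i‖_{L^p} = ‖∑_{i=1}^j ξ_i h_i‖_{L^p}`. -/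
theorem faithful_haar_isometrically_equivalent
    (p : ℝ≥0∞) (hp : 1 ≤ p) (hptop : p ≠ ∞)
    (H : FaithfulHaarSystem) (j : ℕ) (hj : 1 ≤ j) (ξ : ℕ → ℝ) :
    eLpNorm (fun t => ∑ i ∈ Finset.Icc 1 j, ξ i * H.h i t) p mu01 =
      eLpNorm (fun t => ∑ i ∈ Finset.Icc 1 j, ξ i * haarN i t) p mu01 := by
  rw [FHS.main_formula H p hp hptop j hj ξ,
    show (fun t => ∑ i ∈ Finset.Icc 1 j, ξ i * haarN i t)
      = (fun t => ∑ i ∈ Finset.Icc 1 j, ξ i * FHS.std.h i t) from rfl,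
    FHS.main_formula FHS.std p hp hptop j hj ξ]
end

section
/- Let (h̃_j)_{j≥1} be a faithful Haar system. Then for every j ≥ 2, the measure of the support of h̃_j equals the measure of the corresponding dyadic interval in the Haar enumeration: λ(supp(h̃_j)) = λ(I_j). -/
open MeasureTheory Set Function Filter
open scoped ENNReal

section AuxProof

open scoped ENNReal

lemma mu01_Ico {a b : ℝ} (h0 : 0 ≤ a) (h1 : b ≤ 1) :
    mu01 (Set.Ico a b) = ENNReal.ofReal (b - a) := by
  have hsub : Set.Ico a b ⊆ Set.Ico (0:ℝ) 1 :=
    fun t ht => ⟨le_trans h0 ht.1, lt_of_lt_of_le ht.2 h1⟩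
  rw [mu01, Measure.restrict_apply measurableSet_Ico, Set.inter_eq_left.2 hsub,
    Real.volume_Ico]

lemma mu01_Ico_zero {a b : ℝ} (h : 1 ≤ a) : mu01 (Set.Ico a b) = 0 := by
  rw [mu01, Measure.restrict_apply measurableSet_Ico]
  have he : Set.Ico a b ∩ Set.Ico (0:ℝ) 1 = ∅ := by
    apply Set.eq_empty_iff_forall_notMem.2
    intro t ht
    simp only [Set.mem_inter_iff, Set.mem_Ico] at ht
    linarith [ht.1.1, ht.2.2]
  simp [he]

instance inst_s12 : IsFiniteMeasure mu01 := by
  constructor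
  rw [mu01, Measure.restrict_apply_univ, Real.volume_Ico]
  norm_num

lemma integrable_ind (s : Set ℝ) (hs : MeasurableSet s) :
    Integrable (s.indicator (fun _ => (1:ℝ))) mu01 :=
  (integrable_indicator_iff hs).2 (integrableOn_const (measure_ne_top _ _))

lemma integral_ind (s : Set ℝ) (hs : MeasurableSet s) :
    ∫ t, s.indicator (fun _ => (1:ℝ)) t ∂mu01 = (mu01 s).toReal := by
  rw [integral_indicator_const (1:ℝ) hs]; simp; rfl

lemma integrable_haarD (m i : ℕ) : Integrable (haarD m i) mu01 :=
  (integrable_ind _ measurableSet_Ico).sub (integrable_ind _ measurableSet_Ico)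

lemma integral_haarD (m i : ℕ) : ∫ t, haarD m i t ∂mu01 = 0 := by
  unfold haarD
  rw [integral_sub (integrable_ind _ measurableSet_Ico) (integrable_ind _ measurableSet_Ico),
    integral_ind _ measurableSet_Ico, integral_ind _ measurableSet_Ico]
  have h2 : (0:ℝ) < 2^(m+1) := by positivity
  rcases lt_or_ge i (2^m) with hi | hi
  · have hle : (2*i+2 : ℝ) ≤ 2^(m+1) := by
      have : (i:ℝ) + 1 ≤ 2^m := by exact_mod_cast hi
      rw [pow_succ]; nlinarith
    rw [mu01_Ico (by positivity) (by rw [div_le_one h2]; linarith),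
        mu01_Ico (by positivity) (by rw [div_le_one h2]; linarith)]
    have e1 : ((2*(i:ℝ)+1)/2^(m+1)) - ((2*(i:ℝ))/2^(m+1)) = 1/2^(m+1) := by
      field_simp
      ring
    have e2 : ((2*(i:ℝ)+2)/2^(m+1)) - ((2*(i:ℝ)+1)/2^(m+1)) = 1/2^(m+1) := by
      field_simp
      ring
    rw [e1, e2, sub_self]
  · have hge : (2^(m+1) : ℝ) ≤ 2*i := by
      have : (2^m : ℝ) ≤ i := by exact_mod_cast hi
      rw [pow_succ]; nlinarith
    rw [mu01_Ico_zero (by rw [le_div_iff₀ h2]; linarith),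
        mu01_Ico_zero (by rw [le_div_iff₀ h2]; linarith)]
    simp

lemma FHS_meas_one (H : FaithfulHaarSystem) (k : ℕ) : MeasurableSet {t | H.h k t = 1} :=
  measurableSet_eq_fun (H.meas k) measurable_const

lemma FHS_meas_neg (H : FaithfulHaarSystem) (k : ℕ) : MeasurableSet {t | H.h k t = -1} :=
  measurableSet_eq_fun (H.meas k) measurable_const

lemma FHS_supp_eq (H : FaithfulHaarSystem) (k : ℕ) :
    Function.support (H.h k) = {t | H.h k t = 1} ∪ {t | H.h k t = -1} := by
  ext t
  rcases H.vals k t with h | h | h <;>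
    simp [Function.mem_support, h]

lemma FHS_integral_zero (H : FaithfulHaarSystem) (k : ℕ) (hk : 2 ≤ k) :
    ∫ t, H.h k t ∂mu01 = 0 := by
  obtain ⟨S, c, hS⟩ := H.mem_span k hk
  rw [hS, integral_finset_sum S (fun q _ => ((integrable_haarD q.1 q.2).const_mul (c q)))]
  simp [MeasureTheory.integral_const_mul, integral_haarD]

lemma FHS_meas_eq (H : FaithfulHaarSystem) (k : ℕ) (hk : 2 ≤ k) :
    mu01 {t | H.h k t = 1} = mu01 {t | H.h k t = -1} := by
  have hrepr : ∀ t, H.h k t = ({t | H.h k t = 1}).indicator (fun _ => (1:ℝ)) t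
      - ({t | H.h k t = -1}).indicator (fun _ => (1:ℝ)) t := by
    intro t
    rcases H.vals k t with h | h | h <;>
      simp [Set.indicator_apply, Set.mem_setOf_eq, h] <;> norm_num
  have hcalc : ∫ t, H.h k t ∂mu01
      = (mu01 {t | H.h k t = 1}).toReal - (mu01 {t | H.h k t = -1}).toReal := by
    rw [integral_congr_ae (Filter.Eventually.of_forall hrepr),
      integral_sub (integrable_ind _ (FHS_meas_one H k)) (integrable_ind _ (FHS_meas_neg H k)),
      integral_ind _ (FHS_meas_one H k), integral_ind _ (FHS_meas_neg H k)]
  rw [FHS_integral_zero H k hk] at hcalc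
  exact (ENNReal.toReal_eq_toReal_iff' (measure_ne_top _ _) (measure_ne_top _ _)).1 (by linarith)

lemma FHS_half (H : FaithfulHaarSystem) (k : ℕ) (hk : 2 ≤ k) :
    mu01 {t | H.h k t = 1} = mu01 (Function.support (H.h k)) / 2 ∧
    mu01 {t | H.h k t = -1} = mu01 (Function.support (H.h k)) / 2 := by
  have hAB : Disjoint {t | H.h k t = 1} {t | H.h k t = -1} := by
    rw [Set.disjoint_left]
    intro t h1 h2
    simp only [Set.mem_setOf_eq] at h1 h2
    rw [h1] at h2; norm_num at h2
  have hsupp : mu01 (Function.support (H.h k))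
      = mu01 {t | H.h k t = 1} + mu01 {t | H.h k t = -1} := by
    rw [FHS_supp_eq, measure_union hAB (FHS_meas_neg H k)]
  have heq := FHS_meas_eq H k hk
  have h1 : mu01 {t | H.h k t = 1} = mu01 (Function.support (H.h k)) / 2 := by
    rw [hsupp, ← heq, ← two_mul, ENNReal.eq_div_iff two_ne_zero ENNReal.ofNat_ne_top]
  exact ⟨h1, heq ▸ h1⟩

lemma log_two_mul (n : ℕ) (hn : 1 ≤ n) : Nat.log 2 (2*n) = Nat.log 2 n + 1 := by
  rw [mul_comm]; exact Nat.log_mul_base one_lt_two (by omega)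

lemma log_two_odd (n : ℕ) (hn : 1 ≤ n) : Nat.log 2 (2*n+1) = Nat.log 2 n + 1 := by
  have hp := Nat.pow_log_le_self 2 (x := n) (by omega)
  have hq := Nat.lt_pow_succ_log_self (b := 2) one_lt_two n
  have hq' : n + 1 ≤ 2^(Nat.log 2 n + 1) := hq
  apply Nat.log_eq_of_pow_le_of_lt_pow
  · have e : 2^(Nat.log 2 n + 1) = 2 * 2^(Nat.log 2 n) := by ring
    omega
  · have e : 2^(Nat.log 2 n + 1 + 1) = 2 * 2^(Nat.log 2 n + 1) := by ring
    omega

lemma measI_even (k : ℕ) (hk : 2 ≤ k) : measI (2*k) = measI k / 2 := by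
  unfold measI
  rw [if_neg (by omega), if_neg (by omega)]
  have h1 : 2*k - 1 = 2*(k-1)+1 := by omega
  rw [h1, log_two_odd (k-1) (by omega), pow_succ, mul_inv]
  ring

lemma measI_odd (k : ℕ) (hk : 2 ≤ k) : measI (2*k-1) = measI k / 2 := by
  unfold measI
  rw [if_neg (by omega), if_neg (by omega)]
  have h1 : 2*k - 1 - 1 = 2*(k-1) := by omega
  rw [h1, log_two_mul (k-1) (by omega), pow_succ, mul_inv]
  ring

lemma measI_pos (k : ℕ) : 0 < measI k := by
  unfold measI
  split <;> positivity

end AuxProof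
/-- For a faithful Haar system `(h̃_j)` and every `j ≥ 2`, the measure of
the support of `h̃_j` equals the measure of the corresponding dyadic interval in the Haar
enumeration: `λ(supp h̃_j) = λ(I_j)`. -/
theorem faithful_haar_support_measure
    (H : FaithfulHaarSystem) (j : ℕ) (hj : 2 ≤ j) :
    mu01 (Function.support (H.h j)) = ENNReal.ofReal (measI j) := by
  induction j using Nat.strong_induction_on with
  | _ j ih =>
    rcases eq_or_lt_of_le hj with h2 | h3
    · rw [← h2, H.supp_two, mu01_Ico le_rfl le_rfl]
      norm_num [measI]
    · rcases Nat.even_or_odd j with ⟨k, hk⟩ | ⟨k, hk⟩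
      · have hk2 : 2 ≤ k := by omega
        have hjj : j = 2*k := by omega
        rw [hjj, H.supp_even k hk2, (FHS_half H k hk2).2, ih k (by omega) hk2,
          measI_even k hk2, ENNReal.ofReal_div_of_pos two_pos]
        norm_num
      · have hk2 : 2 ≤ k + 1 := by omega
        have hjj : j = 2*(k+1) - 1 := by omega
        rw [hjj, H.supp_odd (k+1) hk2, (FHS_half H (k+1) hk2).1, ih (k+1) (by omega) hk2,
          measI_odd (k+1) hk2, ENNReal.ofReal_div_of_pos two_pos]
        norm_num
end

section
/- Let (h̃_j)_{j≥1} be a faithful Haar system. Then for every j ≥ 1 and all real scalars α_1, …, α_j, the linear combination Σ_{i=1}^j α_i·h̃_i is constant on the support of h̃_{j+1}; that is, there exists c ∈ ℝ such that Σ_{i=1}^j α_i·h̃_i(t) = c for all t ∈ supp(h̃_{j+1}). -/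
open MeasureTheory Set Function Filter
open scoped ENNReal

namespace FHSAux

/-- The sign of the `n`-th Haar index: `1` for odd (left child), `-1` for even. -/
noncomputable def sgn (n : ℕ) : ℝ := if n % 2 = 1 then 1 else -1

lemma sgn_ne_zero (n : ℕ) : sgn n ≠ 0 := by
  unfold sgn; split_ifs <;> norm_num

lemma sgn_mod {x y : ℕ} (h : sgn x = sgn y) : x % 2 = y % 2 := by
  unfold sgn at h
  split_ifs at h <;> first | omega | norm_num at h

/-- One parent step in the index tree. -/
def Step (x y : ℕ) : Prop := 3 ≤ x ∧ y = (x + 1) / 2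

/-- `a` is an ancestor (or equal) of `b` in the index tree. -/
def Anc (a b : ℕ) : Prop := Relation.ReflTransGen Step b a

lemma supp_eq (H : FaithfulHaarSystem) (p : ℕ) (hp : 3 ≤ p) :
    Function.support (H.h p) = {t | H.h ((p + 1) / 2) t = sgn p} := by
  rcases Nat.even_or_odd p with he | ho
  · obtain ⟨k, hk⟩ := he
    have hk2 : 2 ≤ k := by omega
    have e1 : 2 * k = p := by omega
    have e2 : (p + 1) / 2 = k := by omega
    have e3 : sgn p = -1 := by unfold sgn; rw [if_neg (by omega)]
    rw [e2, e3, ← e1]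
    exact H.supp_even k hk2
  · obtain ⟨k, hk⟩ := ho
    have hk2 : 2 ≤ k + 1 := by omega
    have e1 : 2 * (k + 1) - 1 = p := by omega
    have e2 : (p + 1) / 2 = k + 1 := by omega
    have e3 : sgn p = 1 := by unfold sgn; rw [if_pos (by omega)]
    rw [e2, e3, ← e1]
    exact H.supp_odd (k + 1) hk2

lemma anc_supp (H : FaithfulHaarSystem) {a b : ℕ} (h : Anc a b) :
    Function.support (H.h b) ⊆ Function.support (H.h a) := by
  induction h with
  | refl => exact subset_rfl
  | tail hbc hca ih =>
    refine subset_trans ih ?_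
    obtain ⟨h3, rfl⟩ := hca
    rw [supp_eq H _ h3]
    intro t ht
    simp only [Set.mem_setOf_eq] at ht
    exact Function.mem_support.2 (by rw [ht]; exact sgn_ne_zero _)

lemma anc_two : ∀ b, 2 ≤ b → Anc 2 b := by
  intro b
  induction b using Nat.strong_induction_on with
  | _ b ih =>
    intro hb
    rcases Nat.lt_or_ge b 3 with hlt | h3
    · have hb2 : b = 2 := by omega
      subst hb2
      exact Relation.ReflTransGen.refl
    · exact Relation.ReflTransGen.head ⟨h3, rfl⟩ (ih ((b + 1) / 2) (by omega) (by omega))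

lemma anc_branch (H : FaithfulHaarSystem) :
    ∀ b a, Anc a b → a ≠ b →
      ∃ p, 3 ≤ p ∧ Anc p b ∧ (p + 1) / 2 = a ∧
        ∀ t ∈ Function.support (H.h b), H.h a t = sgn p := by
  intro b
  induction b using Nat.strong_induction_on with
  | _ b ih =>
    intro a hanc hne
    rcases Relation.ReflTransGen.cases_head hanc with heq | ⟨c, hstep, htail⟩
    · exact absurd heq.symm hne
    · obtain ⟨hb3, hc⟩ := hstep
      subst hc
      by_cases hac : a = (b + 1) / 2
      · subst hac
        refine ⟨b, hb3, Relation.ReflTransGen.refl, rfl, ?_⟩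
        intro t ht
        rw [supp_eq H b hb3] at ht
        exact ht
      · obtain ⟨p, hp3, hpanc, hppar, hval⟩ := ih ((b + 1) / 2) (by omega) a htail hac
        refine ⟨p, hp3, Relation.ReflTransGen.head ⟨hb3, rfl⟩ hpanc, hppar, ?_⟩
        intro t ht
        refine hval t ?_
        rw [supp_eq H b hb3] at ht
        simp only [Set.mem_setOf_eq] at ht
        exact Function.mem_support.2 (by rw [ht]; exact sgn_ne_zero _)

lemma disj_or_anc (H : FaithfulHaarSystem) :
    ∀ b a, 2 ≤ a → a < b →
      (∀ t ∈ Function.support (H.h b), H.h a t = 0) ∨ Anc a b := by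
  intro b
  induction b using Nat.strong_induction_on with
  | _ b ih =>
    intro a ha2 hab
    have hb3 : 3 ≤ b := by omega
    obtain ⟨k, hk⟩ : ∃ k, k = (b + 1) / 2 := ⟨_, rfl⟩
    have hk2 : 2 ≤ k := by omega
    have hkb : k < b := by omega
    have hsub : Function.support (H.h b) ⊆ Function.support (H.h k) := by
      rw [supp_eq H b hb3, hk]
      intro t ht
      simp only [Set.mem_setOf_eq] at ht
      exact Function.mem_support.2 (by rw [ht]; exact sgn_ne_zero _)
    rcases lt_trichotomy a k with hak | hak | hak
    · rcases ih k hkb a ha2 hak with hz | hanc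
      · exact Or.inl fun t ht => hz t (hsub ht)
      · exact Or.inr (Relation.ReflTransGen.head ⟨hb3, hk⟩ hanc)
    · subst hak
      exact Or.inr (Relation.ReflTransGen.head ⟨hb3, hk⟩ Relation.ReflTransGen.refl)
    · have ha3 : 3 ≤ a := by omega
      obtain ⟨m, hm⟩ : ∃ m, m = (a + 1) / 2 := ⟨_, rfl⟩
      have hm2 : 2 ≤ m := by omega
      have hmk : m ≤ k := by omega
      have hsuppa : Function.support (H.h a) = {t | H.h m t = sgn a} := by
        rw [hm]; exact supp_eq H a ha3
      have hsuppb : Function.support (H.h b) = {t | H.h k t = sgn b} := by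
        rw [hk]; exact supp_eq H b hb3
      rcases eq_or_lt_of_le hmk with hmk' | hmk'
      · -- m = k : siblings, disjoint
        left
        intro t ht
        by_contra hne0
        have hta : t ∈ Function.support (H.h a) := Function.mem_support.2 hne0
        rw [hsuppa] at hta
        rw [hsuppb] at ht
        simp only [Set.mem_setOf_eq] at ht hta
        rw [hmk'] at hta
        have hse : sgn a = sgn b := by rw [← hta, ht]
        have := sgn_mod hse
        omega
      · rcases ih k hkb m hm2 hmk' with hz | hanc
        · left
          intro t ht
          by_contra hne0
          have hta : t ∈ Function.support (H.h a) := Function.mem_support.2 hne0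
          rw [hsuppa] at hta
          simp only [Set.mem_setOf_eq] at hta
          have h0 := hz t (hsub ht)
          exact sgn_ne_zero a (by rw [← hta, h0])
        · obtain ⟨p, hp3, hpk, hppar, hval⟩ := anc_branch H k m hanc (by omega)
          by_cases hpa : p = a
          · subst hpa
            exact Or.inr (Relation.ReflTransGen.head ⟨hb3, hk⟩ hpk)
          · left
            intro t ht
            by_contra hne0
            have hta : t ∈ Function.support (H.h a) := Function.mem_support.2 hne0
            rw [hsuppa] at hta
            simp only [Set.mem_setOf_eq] at hta
            have h1 := hval t (hsub ht)
            have hse : sgn p = sgn a := by rw [← h1, hta]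
            have := sgn_mod hse
            omega

lemma const_on (H : FaithfulHaarSystem) (b a : ℕ) (hb : 2 ≤ b) (ha : 1 ≤ a)
    (hab : a < b) : ∃ c, ∀ t ∈ Function.support (H.h b), H.h a t = c := by
  rcases eq_or_lt_of_le ha with h1 | h2
  · refine ⟨1, fun t ht => ?_⟩
    have h01 : t ∈ Set.Ico (0 : ℝ) 1 := H.supp_two ▸ anc_supp H (anc_two b hb) ht
    rw [← h1, H.one]
    exact Set.indicator_of_mem h01 _
  · rcases disj_or_anc H b a h2 hab with hz | hanc
    · exact ⟨0, hz⟩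
    · obtain ⟨p, _, _, _, hval⟩ := anc_branch H b a hanc (by omega)
      exact ⟨sgn p, hval⟩

end FHSAux

/-- For a faithful Haar system `(h̃_j)`, every `j ≥ 1` and all real scalars
`α_1, …, α_j`, the linear combination `∑_{i=1}^j α_i h̃_i` is constant on the support
of `h̃_{j+1}`. -/
theorem faithful_haar_sum_constant_on_next_support
    (H : FaithfulHaarSystem) (j : ℕ) (hj : 1 ≤ j) (α : ℕ → ℝ) :
    ∃ c : ℝ, ∀ t ∈ Function.support (H.h (j + 1)),
      ∑ i ∈ Finset.Icc 1 j, α i * H.h i t = c := by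
  have key : ∀ i ∈ Finset.Icc 1 j, ∃ c, ∀ t ∈ Function.support (H.h (j + 1)),
      H.h i t = c := by
    intro i hi
    simp only [Finset.mem_Icc] at hi
    exact FHSAux.const_on H (j + 1) i (by omega) hi.1 (by omega)
  choose! c hc using key
  refine ⟨∑ i ∈ Finset.Icc 1 j, α i * c i, fun t ht => ?_⟩
  exact Finset.sum_congr rfl fun i hi => by rw [hc i hi t ht]
end
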